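/- arXiv:2212.14685 — 7 statements merged into one kernel-verified Lean document; each statement's English description precedes it below -/
import Mathlib

section
/- For every n ≥ 3 there exists an irreducible subcube partition of {0,1}^n containing exactly 2^{n-2} points (0-dimensional subcubes). -/
/-- A subcube of `{0,1}^n`, given as a word over `{0,1,*}` (`none` is `*`). -/
abbrev Subcube (n : ℕ) := Fin n → Option Bool

/-- The set of points of `{0,1}^n` covered by a subcube. -/
def Subcube.points {n : ℕ} (s : Subcube n) : Set (Fin n → Bool) :=
  {x | ∀ i : Fin n, ∀ b : Bool, s i = some b → x i = b}

/-- A subcube partition: pairwise disjoint subcubes covering the whole cube. -/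
def IsSubcubePartition {n : ℕ} (F : Finset (Subcube n)) : Prop :=
  (∀ s ∈ F, ∀ t ∈ F, s ≠ t → Disjoint (Subcube.points s) (Subcube.points t)) ∧
  (⋃ s ∈ F, Subcube.points s) = Set.univ

/-- Tightness: every coordinate is mentioned by some subcube. -/
def IsTight {n : ℕ} (F : Finset (Subcube n)) : Prop :=
  ∀ i : Fin n, ∃ s ∈ F, s i ≠ none

/-- Irreducibility of a subcube partition. -/
def IsIrreduciblePartition {n : ℕ} (F : Finset (Subcube n)) : Prop :=
  ¬ ∃ G ⊆ F, 1 < G.card ∧ G.card < F.card ∧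
      ∃ u : Subcube n, (⋃ s ∈ G, Subcube.points s) = Subcube.points u

/-- The codimension: number of non-star coordinates. -/
def Subcube.codim {n : ℕ} (s : Subcube n) : ℕ :=
  (Finset.univ.filter (fun i : Fin n => s i ≠ none)).card

/-- The weight: number of coordinates equal to `1`. -/
def Subcube.weight {n : ℕ} (s : Subcube n) : ℕ :=
  (Finset.univ.filter (fun i : Fin n => s i = some true)).card

/-- The star pattern of a subcube. -/
def Subcube.pattern {n : ℕ} (s : Subcube n) : Finset (Fin n) :=
  Finset.univ.filter (fun i : Fin n => s i = none)

namespace SMP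

/-- decidable membership predicate -/
def memP {n : ℕ} (s : Subcube n) (x : Fin n → Bool) : Prop :=
  ∀ i : Fin n, ∀ b : Bool, s i = some b → x i = b

instance {n : ℕ} (s : Subcube n) (x : Fin n → Bool) : Decidable (memP s x) := by
  unfold memP; infer_instance

lemma mem_points {n : ℕ} {s : Subcube n} {x : Fin n → Bool} :
    x ∈ Subcube.points s ↔ memP s x := Iff.rfl

lemma partition_iff {n : ℕ} (F : Finset (Subcube n)) :
    IsSubcubePartition F ↔
      ((∀ s ∈ F, ∀ t ∈ F, s ≠ t → ∀ x, ¬(memP s x ∧ memP t x)) ∧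
        ∀ x, ∃ s ∈ F, memP s x) := by
  unfold IsSubcubePartition
  rw [Set.eq_univ_iff_forall]
  constructor
  · rintro ⟨h1, h2⟩
    refine ⟨fun s hs t ht hst x hx => ?_, fun x => ?_⟩
    · exact Set.disjoint_left.mp (h1 s hs t ht hst) hx.1 hx.2
    · have := h2 x
      simpa [mem_points] using this
  · rintro ⟨h1, h2⟩
    refine ⟨fun s hs t ht hst => Set.disjoint_left.mpr
      (fun x hxs hxt => h1 s hs t ht hst x ⟨hxs, hxt⟩), fun x => ?_⟩
    simpa [mem_points] using h2 x

lemma irred_iff {n : ℕ} (F : Finset (Subcube n)) :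
    IsIrreduciblePartition F ↔
      ¬ ∃ G ∈ F.powerset, 1 < G.card ∧ G.card < F.card ∧
        ∃ u : Subcube n, ∀ x, (∃ s ∈ G, memP s x) ↔ memP u x := by
  unfold IsIrreduciblePartition
  refine not_congr ?_
  constructor
  · rintro ⟨G, hG, h1, h2, u, hu⟩
    refine ⟨G, Finset.mem_powerset.mpr hG, h1, h2, u, fun x => ?_⟩
    rw [Set.ext_iff] at hu
    have := hu x
    simpa [mem_points] using this
  · rintro ⟨G, hG, h1, h2, u, hu⟩
    refine ⟨G, Finset.mem_powerset.mp hG, h1, h2, u, Set.ext fun x => ?_⟩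
    have := hu x
    simpa [mem_points] using this

end SMP

namespace SMP

def a3 : Subcube 3 := ![none, some true, some false]
def F3 : Finset (Subcube 3) :=
  {![some false, some false, some false], ![some false, none, some true],
   ![none, some true, some false], ![some true, some false, none],
   ![some true, some true, some true]}
def G3 : Finset (Subcube 3) :=
  {![some false, some false, none], ![none, some true, some false],
   ![some false, some true, some true], ![some true, some false, some false],
   ![some true, none, some true]}

lemma F3part : IsSubcubePartition F3 := by
  rw [partition_iff]; decide

lemma F3irr : IsIrreduciblePartition F3 := by
  rw [irred_iff]; decide

lemma G3part : IsSubcubePartition G3 := by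
  rw [partition_iff]; decide

lemma G3irr : IsIrreduciblePartition G3 := by
  rw [irred_iff]; decide

lemma base_misc : a3 ∈ F3 ∧ a3 ∈ G3 ∧ F3 ∩ G3 = {a3} ∧
    (F3.filter (fun s => ∀ i : Fin 3, s i ≠ none)).card = 2 ∧
    (G3.filter (fun s => ∀ i : Fin 3, s i ≠ none)).card = 2 := by
  decide



variable {n : ℕ}

/-- canonical point of a subcube -/
def pt (s : Subcube n) (d : Fin n → Bool) : Fin n → Bool := fun i => (s i).getD (d i)

lemma pt_mem (s : Subcube n) (d : Fin n → Bool) : pt s d ∈ s.points := by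
  intro i b h
  simp [pt, h]

lemma points_nonempty (s : Subcube n) : s.points.Nonempty :=
  ⟨pt s (fun _ => false), pt_mem s _⟩

lemma eq_of_points_eq {s t : Subcube n} (h : s.points = t.points) : s = t := by
  funext i
  have key : ∀ (s t : Subcube n), s.points = t.points → ∀ b, t i = some b → s i ≠ none := by
    intro s t h b htb hsn
    have hmem : pt s (fun _ => !b) ∈ t.points := h ▸ pt_mem s _
    have := hmem i b htb
    simp [pt, hsn] at this
  match hs : s i, ht : t i with
  | none, none => rfl
  | none, some b => exact absurd hs (key s t h b ht)
  | some b, none => exact absurd ht (key t s h.symm b hs)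
  | some b, some c =>
    have h1 := pt_mem s (fun _ => false) i b hs
    have h2 : pt s (fun _ => false) ∈ t.points := h ▸ pt_mem s _
    have h3 := h2 i c ht
    rw [h1] at h3; rw [h3]

lemma mem_snoc {s : Subcube n} {c : Option Bool} {x : Fin (n+1) → Bool} :
    x ∈ Subcube.points (Fin.snoc s c : Subcube (n+1)) ↔
      (Fin.init x ∈ s.points ∧ ∀ b : Bool, c = some b → x (Fin.last n) = b) := by
  constructor
  · intro hx
    refine ⟨fun i b h => ?_, fun b h => ?_⟩
    · have := hx (Fin.castSucc i) b (by rwa [Fin.snoc_castSucc])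
      simpa [Fin.init] using this
    · exact hx (Fin.last n) b (by rwa [Fin.snoc_last])
  · rintro ⟨h1, h2⟩ i b h
    induction i using Fin.lastCases with
    | last => rw [Fin.snoc_last] at h; exact h2 b h
    | cast j => rw [Fin.snoc_castSucc] at h; exact h1 j b h

lemma mem_iff_init {u : Subcube (n+1)} {x : Fin (n+1) → Bool} :
    x ∈ u.points ↔
      (Fin.init x ∈ Subcube.points (Fin.init u : Subcube n) ∧
        ∀ b : Bool, u (Fin.last n) = some b → x (Fin.last n) = b) := by
  conv_lhs => rw [← Fin.snoc_init_self u]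
  exact mem_snoc

def lift (c : Option Bool) (s : Subcube n) : Subcube (n+1) := Fin.snoc s c

lemma lift_inj {c : Option Bool} : Function.Injective (lift (n := n) c) := by
  intro s t h
  funext i
  have := congrFun h (Fin.castSucc i)
  simpa [lift] using this

lemma lift_last (c : Option Bool) (s : Subcube n) : lift c s (Fin.last n) = c := by
  simp [lift]

lemma lift_ne {c c' : Option Bool} {s t : Subcube n} (h : c ≠ c') : lift c s ≠ lift c' t := by
  intro he
  exact h (by rw [← lift_last c s, ← lift_last c' t, he])

lemma mem_lift {s : Subcube n} {c : Option Bool} {x : Fin (n+1) → Bool} :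
    x ∈ (lift c s).points ↔
      (Fin.init x ∈ s.points ∧ ∀ b : Bool, c = some b → x (Fin.last n) = b) := mem_snoc


def step (F G : Finset (Subcube n)) (a : Subcube n) : Finset (Subcube (n+1)) :=
  ((F.erase a).image (lift (some false))) ∪ ((G.erase a).image (lift (some true))) ∪ {lift none a}

lemma mem_step {F G : Finset (Subcube n)} {a : Subcube n} {h : Subcube (n+1)} :
    h ∈ step F G a ↔
      (∃ s ∈ F.erase a, h = lift (some false) s) ∨
      (∃ s ∈ G.erase a, h = lift (some true) s) ∨ h = lift none a := by
  simp [step, Finset.mem_union, Finset.mem_image, eq_comm]; exact or_rotate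

/-- members of a partition containing a common point are equal -/
lemma part_eq {F : Finset (Subcube n)} (hF : IsSubcubePartition F) {s t : Subcube n}
    (hs : s ∈ F) (ht : t ∈ F) {x : Fin n → Bool}
    (hxs : x ∈ s.points) (hxt : x ∈ t.points) : s = t := by
  by_contra hne
  exact Set.disjoint_left.mp (hF.1 s hs t ht hne) hxs hxt

lemma part_cover {F : Finset (Subcube n)} (hF : IsSubcubePartition F) (x : Fin n → Bool) :
    ∃ s ∈ F, x ∈ s.points := by
  have := hF.2 ▸ Set.mem_univ x
  simpa using (hF.2.symm ▸ Set.mem_univ x : x ∈ ⋃ s ∈ F, s.points)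

theorem step_partition {F G : Finset (Subcube n)} {a : Subcube n}
    (hF : IsSubcubePartition F) (hG : IsSubcubePartition G)
    (haF : a ∈ F) (haG : a ∈ G) :
    IsSubcubePartition (step F G a) := by
  constructor
  · intro s hs t ht hne
    rw [Set.disjoint_left]
    intro x hxs hxt
    rw [mem_step] at hs ht
    have hlast := fun (c : Option Bool) (s' : Subcube n) (h : _ = lift c s') (b : Bool)
        (hb : c = some b) => (h ▸ hxs : x ∈ Subcube.points (lift c s'))
    -- we do a case analysis
    rcases hs with ⟨s', hs', rfl⟩ | ⟨s', hs', rfl⟩ | rfl <;>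
      rcases ht with ⟨t', ht', rfl⟩ | ⟨t', ht', rfl⟩ | rfl <;>
        rw [mem_lift] at hxs hxt
    · have hne' : s' ≠ t' := fun h => hne (by rw [h])
      exact Set.disjoint_left.mp
        (hF.1 s' (Finset.mem_of_mem_erase hs') t' (Finset.mem_of_mem_erase ht') hne')
        hxs.1 hxt.1
    · have h1 := hxs.2 false rfl
      have h2 := hxt.2 true rfl
      rw [h1] at h2; exact absurd h2 (by simp)
    · exact Set.disjoint_left.mp
        (hF.1 s' (Finset.mem_of_mem_erase hs') a haF (Finset.ne_of_mem_erase hs'))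
        hxs.1 hxt.1
    · have h1 := hxs.2 true rfl
      have h2 := hxt.2 false rfl
      rw [h1] at h2; exact absurd h2 (by simp)
    · have hne' : s' ≠ t' := fun h => hne (by rw [h])
      exact Set.disjoint_left.mp
        (hG.1 s' (Finset.mem_of_mem_erase hs') t' (Finset.mem_of_mem_erase ht') hne')
        hxs.1 hxt.1
    · exact Set.disjoint_left.mp
        (hG.1 s' (Finset.mem_of_mem_erase hs') a haG (Finset.ne_of_mem_erase hs'))
        hxs.1 hxt.1
    · exact Set.disjoint_left.mp
        (hF.1 a haF t' (Finset.mem_of_mem_erase ht') (Finset.ne_of_mem_erase ht').symm)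
        hxs.1 hxt.1
    · exact Set.disjoint_left.mp
        (hG.1 a haG t' (Finset.mem_of_mem_erase ht') (Finset.ne_of_mem_erase ht').symm)
        hxs.1 hxt.1
    · exact hne rfl
  · rw [Set.eq_univ_iff_forall]
    intro x
    rw [Set.mem_iUnion₂]
    by_cases hb : x (Fin.last n) = false
    · obtain ⟨s, hs, hxs⟩ := part_cover hF (Fin.init x)
      by_cases hsa : s = a
      · exact ⟨lift none a, mem_step.mpr (Or.inr (Or.inr rfl)),
          mem_lift.mpr ⟨hsa ▸ hxs, fun b hb' => by simp at hb'⟩⟩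
      · exact ⟨lift (some false) s,
          mem_step.mpr (Or.inl ⟨s, Finset.mem_erase.mpr ⟨hsa, hs⟩, rfl⟩),
          mem_lift.mpr ⟨hxs, fun b hb' => by simp at hb'; rw [hb']; exact hb⟩⟩
    · obtain ⟨s, hs, hxs⟩ := part_cover hG (Fin.init x)
      by_cases hsa : s = a
      · exact ⟨lift none a, mem_step.mpr (Or.inr (Or.inr rfl)),
          mem_lift.mpr ⟨hsa ▸ hxs, fun b hb' => by simp at hb'⟩⟩
      · exact ⟨lift (some true) s,
          mem_step.mpr (Or.inr (Or.inl ⟨s, Finset.mem_erase.mpr ⟨hsa, hs⟩, rfl⟩)),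
          mem_lift.mpr ⟨hxs, fun b hb' => by
            simp at hb'; rw [hb']; simpa using hb⟩⟩

lemma lift_some_point {b : Bool} {s : Subcube n} :
    (∀ i : Fin (n+1), lift (some b) s i ≠ none) ↔ (∀ i : Fin n, s i ≠ none) := by
  constructor
  · intro h i
    have := h (Fin.castSucc i)
    simpa [lift] using this
  · intro h i
    induction i using Fin.lastCases with
    | last => simp [lift]
    | cast j => simpa [lift] using h j

theorem step_count {F G : Finset (Subcube n)} {a : Subcube n}
    (haF : a ∈ F) (haG : a ∈ G) (hstar : ∃ i, a i = none) :
    ((step F G a).filter (fun s => ∀ i : Fin (n+1), s i ≠ none)).card =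
      (F.filter (fun s => ∀ i : Fin n, s i ≠ none)).card +
      (G.filter (fun s => ∀ i : Fin n, s i ≠ none)).card := by
  classical
  set P : Subcube n → Prop := fun s => ∀ i : Fin n, s i ≠ none with hP
  set P' : Subcube (n+1) → Prop := fun s => ∀ i : Fin (n+1), s i ≠ none with hP'
  have himg : ∀ (b : Bool) (X : Finset (Subcube n)),
      ((X.image (lift (some b))).filter P') = (X.filter P).image (lift (some b)) := by
    intro b X
    ext h
    simp only [Finset.mem_filter, Finset.mem_image]
    constructor
    · rintro ⟨⟨s, hs, rfl⟩, h2⟩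
      exact ⟨s, ⟨hs, lift_some_point.mp h2⟩, rfl⟩
    · rintro ⟨s, ⟨hs, hPs⟩, rfl⟩
      exact ⟨⟨s, hs, rfl⟩, lift_some_point.mpr hPs⟩
  have hsing : ({lift none a} : Finset (Subcube (n+1))).filter P' = ∅ := by
    rw [Finset.filter_singleton]
    have : ¬ P' (lift none a) := by
      intro h; exact h (Fin.last n) (lift_last none a)
    simp [this]
  have herase : ∀ (X : Finset (Subcube n)), a ∈ X → (X.erase a).filter P = X.filter P := by
    intro X haX
    rw [Finset.filter_erase]
    apply Finset.erase_eq_of_notMem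
    simp only [Finset.mem_filter]
    rintro ⟨-, h⟩
    obtain ⟨i, hi⟩ := hstar
    exact h i hi
  have hdisj1 : Disjoint (((F.erase a).filter P).image (lift (some false)))
      (((G.erase a).filter P).image (lift (some true))) := by
    rw [Finset.disjoint_left]
    intro h h1 h2
    rw [Finset.mem_image] at h1 h2
    obtain ⟨s, -, hs⟩ := h1
    obtain ⟨t, -, ht⟩ := h2
    exact lift_ne (c := some false) (c' := some true) (by simp) (hs.trans ht.symm)
  have hdisj2 : Disjoint ((((F.erase a).filter P).image (lift (some false))) ∪
      (((G.erase a).filter P).image (lift (some true)))) (∅ : Finset (Subcube (n+1))) := by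
    simp
  rw [step, Finset.filter_union, Finset.filter_union, hsing, himg, himg,
    Finset.union_empty, Finset.card_union_of_disjoint hdisj1,
    Finset.card_image_of_injective _ lift_inj, Finset.card_image_of_injective _ lift_inj,
    herase F haF, herase G haG]

lemma snoc_mem_lift {s : Subcube n} {c : Option Bool} {y : Fin n → Bool} {b : Bool} :
    (Fin.snoc y b : Fin (n+1) → Bool) ∈ Subcube.points (lift c s) ↔
      (y ∈ s.points ∧ ∀ b' : Bool, c = some b' → b = b') := by
  rw [mem_lift]
  simp

lemma snoc_mem_u {u : Subcube (n+1)} {y : Fin n → Bool} {b : Bool} :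
    (Fin.snoc y b : Fin (n+1) → Bool) ∈ u.points ↔
      (y ∈ Subcube.points (Fin.init u : Subcube n) ∧
        ∀ b' : Bool, u (Fin.last n) = some b' → b = b') := by
  rw [mem_iff_init]
  simp

theorem step_irred {F G : Finset (Subcube n)} {a : Subcube n}
    (hF : IsSubcubePartition F) (hG : IsSubcubePartition G)
    (hFi : IsIrreduciblePartition F) (hGi : IsIrreduciblePartition G)
    (haF : a ∈ F) (haG : a ∈ G) (hI : F ∩ G = {a}) :
    IsIrreduciblePartition (step F G a) := by
  classical
  rintro ⟨G', hsub, h1, h2, u, hu⟩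
  have hux : ∀ x, (∃ h ∈ G', x ∈ Subcube.points h) ↔ x ∈ u.points := by
    intro x
    rw [Set.ext_iff] at hu
    have := hu x
    simpa using this
  set u' : Subcube n := Fin.init u with hu'
  set S₀ : Finset (Subcube n) := (F.erase a).filter (fun s => lift (some false) s ∈ G') with hS₀
  set S₁ : Finset (Subcube n) := (G.erase a).filter (fun s => lift (some true) s ∈ G') with hS₁
  set astar : Subcube (n+1) := lift none a with hastar
  -- the slice characterization
  have key : ∀ (b : Bool) (y : Fin n → Bool),
      ((∃ s, s ∈ (if b then S₁ else S₀) ∧ y ∈ Subcube.points s) ∨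
        (astar ∈ G' ∧ y ∈ a.points)) ↔
      (y ∈ u'.points ∧ ∀ b' : Bool, u (Fin.last n) = some b' → b = b') := by
    intro b y
    rw [← snoc_mem_u, ← hux]
    constructor
    · rintro (⟨s, hs, hys⟩ | ⟨hA, hya⟩)
      · rcases Bool.dichotomy b with hb | hb <;> subst hb
        · rw [if_neg (by decide), hS₀, Finset.mem_filter] at hs
          exact ⟨_, hs.2, snoc_mem_lift.mpr ⟨hys, by rintro b' ⟨rfl⟩; rfl⟩⟩
        · rw [if_pos rfl, hS₁, Finset.mem_filter] at hs
          exact ⟨_, hs.2, snoc_mem_lift.mpr ⟨hys, by rintro b' ⟨rfl⟩; rfl⟩⟩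
      · exact ⟨astar, hA, snoc_mem_lift.mpr ⟨hya, by rintro b' ⟨⟩⟩⟩
    · rintro ⟨h, hh, hyh⟩
      rcases mem_step.mp (hsub hh) with ⟨s, hs, rfl⟩ | ⟨s, hs, rfl⟩ | rfl
      · obtain ⟨hys, hb⟩ := snoc_mem_lift.mp hyh
        have hb' : b = false := hb false rfl
        subst hb'
        exact Or.inl ⟨s, by rw [if_neg (by decide), hS₀, Finset.mem_filter]; exact ⟨hs, hh⟩, hys⟩
      · obtain ⟨hys, hb⟩ := snoc_mem_lift.mp hyh
        have hb' : b = true := hb true rfl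
        subst hb'
        exact Or.inl ⟨s, by rw [if_pos rfl, hS₁, Finset.mem_filter]; exact ⟨hs, hh⟩, hys⟩
      · exact Or.inr ⟨hh, (snoc_mem_lift.mp hyh).1⟩
  -- using irreducibility of F / G
  have useF : ∀ (S : Finset (Subcube n)) (w : Subcube n), S ⊆ F →
      (∀ y, (∃ s ∈ S, y ∈ Subcube.points s) ↔ y ∈ w.points) →
      S.card ≤ 1 ∨ F.card ≤ S.card := by
    intro S w hSF heq
    by_contra hc
    push_neg at hc
    exact hFi ⟨S, hSF, by omega, by omega, w, by
      ext y; simpa using heq y⟩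
  have useG : ∀ (S : Finset (Subcube n)) (w : Subcube n), S ⊆ G →
      (∀ y, (∃ s ∈ S, y ∈ Subcube.points s) ↔ y ∈ w.points) →
      S.card ≤ 1 ∨ G.card ≤ S.card := by
    intro S w hSG heq
    by_contra hc
    push_neg at hc
    exact hGi ⟨S, hSG, by omega, by omega, w, by
      ext y; simpa using heq y⟩
  have hS₀F : S₀ ⊆ F := fun s hs => Finset.mem_of_mem_erase (Finset.mem_filter.mp hs).1
  have hS₁G : S₁ ⊆ G := fun s hs => Finset.mem_of_mem_erase (Finset.mem_filter.mp hs).1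
  by_cases hA : astar ∈ G'
  · -- case a* ∈ G'
    have hcnone : u (Fin.last n) = none := by
      rcases hc : u (Fin.last n) with _ | b₀
      · rfl
      · obtain ⟨y, hy⟩ := points_nonempty a
        have k1 := (key (!b₀) y).mp (Or.inr ⟨hA, hy⟩)
        have := k1.2 b₀ hc
        simp at this
    have eqb : ∀ (b : Bool) (y : Fin n → Bool),
        ((∃ s, s ∈ (if b then S₁ else S₀) ∧ y ∈ Subcube.points s) ∨ y ∈ a.points) ↔
          y ∈ u'.points := by
      intro b y
      have := key b y
      simp only [hcnone, hA, true_and, reduceCtorEq, false_implies, implies_true, and_true] at this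
      exact this
    rcases useF (insert a S₀) u' (Finset.insert_subset haF hS₀F) (fun y => by
        rw [← eqb false y]
        simp only [Finset.mem_insert, if_false]
        constructor
        · rintro ⟨s, rfl | hs, hys⟩
          · exact Or.inr hys
          · exact Or.inl ⟨s, hs, hys⟩
        · rintro (⟨s, hs, hys⟩ | hya)
          · exact ⟨s, Or.inr hs, hys⟩
          · exact ⟨a, Or.inl rfl, hya⟩) with hle | hge
    · -- insert a S₀ has card ≤ 1, so S₀ = ∅ and points u' = points a
      have haS₀ : a ∉ S₀ := fun h => Finset.notMem_erase a F (Finset.mem_filter.mp h).1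
      have hS₀e : S₀ = ∅ := by
        rw [Finset.card_insert_of_notMem haS₀] at hle
        exact Finset.card_eq_zero.mp (by omega)
      have hu'a : ∀ y, y ∈ u'.points ↔ y ∈ a.points := by
        intro y
        rw [← eqb false y, hS₀e]
        simp
      have hS₁e : S₁ = ∅ := by
        by_contra hne
        obtain ⟨t, ht⟩ := Finset.nonempty_iff_ne_empty.mpr hne
        obtain ⟨y, hy⟩ := points_nonempty t
        have : y ∈ u'.points := (eqb true y).mp (Or.inl ⟨t, by simpa using ht, hy⟩)
        have hya : y ∈ a.points := (hu'a y).mp this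
        have := part_eq hG (hS₁G ht) haG hy hya
        exact Finset.notMem_erase a G (this ▸ (Finset.mem_filter.mp ht).1)
      have : G' ⊆ {astar} := by
        intro h hh
        rcases mem_step.mp (hsub hh) with ⟨s, hs, rfl⟩ | ⟨s, hs, rfl⟩ | rfl
        · exact absurd (Finset.mem_filter.mpr ⟨hs, hh⟩) (hS₀e ▸ Finset.notMem_empty s)
        · exact absurd (Finset.mem_filter.mpr ⟨hs, hh⟩) (hS₁e ▸ Finset.notMem_empty s)
        · exact Finset.mem_singleton_self _
      have := Finset.card_le_card this
      simp at this
      omega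
    · -- insert a S₀ = F, so u' covers everything and G' = step F G a
      have hGF : insert a S₀ = F :=
        Finset.eq_of_subset_of_card_le (Finset.insert_subset haF hS₀F) hge
      have hu'univ : ∀ y, y ∈ u'.points := by
        intro y
        obtain ⟨s, hs, hys⟩ := part_cover hF y
        rw [← hGF] at hs
        refine (eqb false y).mp ?_
        rcases Finset.mem_insert.mp hs with rfl | hs'
        · exact Or.inr hys
        · exact Or.inl ⟨s, by simpa using hs', hys⟩
      have hS₁full : G.erase a ⊆ S₁ := by
        intro t ht
        obtain ⟨y, hy⟩ := points_nonempty t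
        rcases (eqb true y).mpr (hu'univ y) with ⟨s, hs, hys⟩ | hya
        · simp only [if_true] at hs
          have := part_eq hG (Finset.mem_of_mem_erase ht) (hS₁G hs) hy hys
          exact this ▸ hs
        · exact absurd (part_eq hG (Finset.mem_of_mem_erase ht) haG hy hya)
            (Finset.ne_of_mem_erase ht)
      have hS₀full : F.erase a ⊆ S₀ := by
        intro s hs
        have : s ∈ insert a S₀ := hGF ▸ Finset.mem_of_mem_erase hs
        rcases Finset.mem_insert.mp this with rfl | h
        · exact absurd rfl (Finset.ne_of_mem_erase hs)
        · exact h
      have hstepsub : step F G a ⊆ G' := by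
        intro h hh
        rcases mem_step.mp hh with ⟨s, hs, rfl⟩ | ⟨s, hs, rfl⟩ | rfl
        · exact (Finset.mem_filter.mp (hS₀full hs)).2
        · exact (Finset.mem_filter.mp (hS₁full hs)).2
        · exact hA
      have := Finset.card_le_card hstepsub
      omega
  · -- case a* ∉ G'
    have eqb : ∀ (b : Bool) (y : Fin n → Bool),
        (∃ s, s ∈ (if b then S₁ else S₀) ∧ y ∈ Subcube.points s) ↔
          (y ∈ u'.points ∧ ∀ b' : Bool, u (Fin.last n) = some b' → b = b') := by
      intro b y
      have := key b y
      simp only [hA, false_and, or_false] at this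
      exact this
    have hGdecomp : ∀ h ∈ G', (∃ s ∈ S₀, h = lift (some false) s) ∨
        (∃ s ∈ S₁, h = lift (some true) s) := by
      intro h hh
      rcases mem_step.mp (hsub hh) with ⟨s, hs, rfl⟩ | ⟨s, hs, rfl⟩ | rfl
      · exact Or.inl ⟨s, Finset.mem_filter.mpr ⟨hs, hh⟩, rfl⟩
      · exact Or.inr ⟨s, Finset.mem_filter.mpr ⟨hs, hh⟩, rfl⟩
      · exact absurd hh hA
    by_cases hS0e : S₀ = ∅
    · by_cases hS1e : S₁ = ∅
      · -- G' empty, contradiction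
        have : G' = ∅ := by
          rw [Finset.eq_empty_iff_forall_notMem]
          intro h hh
          rcases hGdecomp h hh with ⟨s, hs, -⟩ | ⟨s, hs, -⟩
          · exact (hS0e ▸ Finset.notMem_empty s) hs
          · exact (hS1e ▸ Finset.notMem_empty s) hs
        rw [this] at h1
        simp at h1
      · -- S₀ = ∅, S₁ ≠ ∅
        obtain ⟨t, ht⟩ := Finset.nonempty_iff_ne_empty.mpr hS1e
        obtain ⟨y₁, hy₁⟩ := points_nonempty t
        have hcond := (eqb true y₁).mp ⟨t, by simpa using ht, hy₁⟩
        have hequiv : ∀ y, (∃ s ∈ S₁, y ∈ Subcube.points s) ↔ y ∈ u'.points := by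
          intro y
          constructor
          · intro ⟨s, hs, hys⟩
            exact ((eqb true y).mp ⟨s, by simpa using hs, hys⟩).1
          · intro hy
            obtain ⟨s, hs, hys⟩ := (eqb true y).mpr ⟨hy, hcond.2⟩
            exact ⟨s, by simpa using hs, hys⟩
        rcases useG S₁ u' hS₁G hequiv with hle | hge
        · have : G' ⊆ S₁.image (lift (some true)) := by
            intro h hh
            rcases hGdecomp h hh with ⟨s, hs, rfl⟩ | ⟨s, hs, rfl⟩
            · exact absurd hs (hS0e ▸ Finset.notMem_empty s)
            · exact Finset.mem_image_of_mem _ hs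
          have := Finset.card_le_card this
          have := Finset.card_image_le (s := S₁) (f := lift (some true))
          omega
        · have : S₁ = G := Finset.eq_of_subset_of_card_le hS₁G hge
          have haS₁ : a ∈ S₁ := this ▸ haG
          exact Finset.notMem_erase a G (Finset.mem_filter.mp haS₁).1
    · by_cases hS1e : S₁ = ∅
      · -- S₁ = ∅, S₀ ≠ ∅ (mirror)
        obtain ⟨t, ht⟩ := Finset.nonempty_iff_ne_empty.mpr hS0e
        obtain ⟨y₁, hy₁⟩ := points_nonempty t
        have hcond := (eqb false y₁).mp ⟨t, by simpa using ht, hy₁⟩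
        have hequiv : ∀ y, (∃ s ∈ S₀, y ∈ Subcube.points s) ↔ y ∈ u'.points := by
          intro y
          constructor
          · intro ⟨s, hs, hys⟩
            exact ((eqb false y).mp ⟨s, by simpa using hs, hys⟩).1
          · intro hy
            obtain ⟨s, hs, hys⟩ := (eqb false y).mpr ⟨hy, hcond.2⟩
            exact ⟨s, by simpa using hs, hys⟩
        rcases useF S₀ u' hS₀F hequiv with hle | hge
        · have : G' ⊆ S₀.image (lift (some false)) := by
            intro h hh
            rcases hGdecomp h hh with ⟨s, hs, rfl⟩ | ⟨s, hs, rfl⟩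
            · exact Finset.mem_image_of_mem _ hs
            · exact absurd hs (hS1e ▸ Finset.notMem_empty s)
          have := Finset.card_le_card this
          have := Finset.card_image_le (s := S₀) (f := lift (some false))
          omega
        · have : S₀ = F := Finset.eq_of_subset_of_card_le hS₀F hge
          have haS₀ : a ∈ S₀ := this ▸ haF
          exact Finset.notMem_erase a F (Finset.mem_filter.mp haS₀).1
      · -- both nonempty
        obtain ⟨s₀, hs₀⟩ := Finset.nonempty_iff_ne_empty.mpr hS0e
        obtain ⟨t₁, ht₁⟩ := Finset.nonempty_iff_ne_empty.mpr hS1e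
        obtain ⟨y₀, hy₀⟩ := points_nonempty s₀
        obtain ⟨y₁, hy₁⟩ := points_nonempty t₁
        have hc0 := (eqb false y₀).mp ⟨s₀, by simpa using hs₀, hy₀⟩
        have hc1 := (eqb true y₁).mp ⟨t₁, by simpa using ht₁, hy₁⟩
        have hcnone : u (Fin.last n) = none := by
          rcases hc : u (Fin.last n) with _ | b₀
          · rfl
          · have e0 := hc0.2 b₀ hc
            have e1 := hc1.2 b₀ hc
            rw [← e0] at e1
            simp at e1
        have eqb' : ∀ (b : Bool) (y : Fin n → Bool),
            (∃ s, s ∈ (if b then S₁ else S₀) ∧ y ∈ Subcube.points s) ↔ y ∈ u'.points := by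
          intro b y
          rw [eqb b y]
          simp [hcnone]
        have hequiv0 : ∀ y, (∃ s ∈ S₀, y ∈ Subcube.points s) ↔ y ∈ u'.points := by
          intro y; have := eqb' false y; simpa using this
        have hequiv1 : ∀ y, (∃ s ∈ S₁, y ∈ Subcube.points s) ↔ y ∈ u'.points := by
          intro y; have := eqb' true y; simpa using this
        have hS0card : S₀.card ≤ 1 := by
          rcases useF S₀ u' hS₀F hequiv0 with h | h
          · exact h
          · have : S₀ = F := Finset.eq_of_subset_of_card_le hS₀F h
            have haS : a ∈ S₀ := by rw [this]; exact haF
            exact absurd (Finset.mem_filter.mp haS).1 (Finset.notMem_erase a F)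
        have hS1card : S₁.card ≤ 1 := by
          rcases useG S₁ u' hS₁G hequiv1 with h | h
          · exact h
          · have : S₁ = G := Finset.eq_of_subset_of_card_le hS₁G h
            have haS : a ∈ S₁ := by rw [this]; exact haG
            exact absurd (Finset.mem_filter.mp haS).1 (Finset.notMem_erase a G)
        have hS0s : S₀ = {s₀} := by
          have h1' : ({s₀} : Finset (Subcube n)) ⊆ S₀ := by simpa using hs₀
          exact (Finset.eq_of_subset_of_card_le h1' (by simpa using hS0card)).symm
        have hS1t : S₁ = {t₁} := by
          have h1' : ({t₁} : Finset (Subcube n)) ⊆ S₁ := by simpa using ht₁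
          exact (Finset.eq_of_subset_of_card_le h1' (by simpa using hS1card)).symm
        have hpts : s₀.points = t₁.points := by
          ext y
          rw [show (y ∈ s₀.points) ↔ y ∈ u'.points from by
              rw [← hequiv0 y, hS0s]; simp,
            show (y ∈ t₁.points) ↔ y ∈ u'.points from by
              rw [← hequiv1 y, hS1t]; simp]
        have hst : s₀ = t₁ := eq_of_points_eq hpts
        have : s₀ ∈ F ∩ G := Finset.mem_inter.mpr ⟨hS₀F hs₀, hst ▸ hS₁G ht₁⟩
        rw [hI, Finset.mem_singleton] at this
        exact Finset.notMem_erase a F (this ▸ (Finset.mem_filter.mp hs₀).1)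


lemma pow_helper {n : ℕ} (hn : 3 ≤ n) :
    2 ^ (n - 2) + 2 ^ (n - 2) = 2 ^ (n + 1 - 2) := by
  have h3 : n + 1 - 2 = (n - 2) + 1 := by omega
  rw [h3, pow_succ]
  ring

theorem key_ind : ∀ n : ℕ, 3 ≤ n → ∃ (a : Subcube n) (F G : Finset (Subcube n)),
    IsSubcubePartition F ∧ IsSubcubePartition G ∧ IsIrreduciblePartition F ∧
    IsIrreduciblePartition G ∧ a ∈ F ∧ a ∈ G ∧ F ∩ G = {a} ∧ (∃ i, a i = none) ∧
    (F.filter (fun s => ∀ i : Fin n, s i ≠ none)).card = 2 ^ (n - 2) ∧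
    (G.filter (fun s => ∀ i : Fin n, s i ≠ none)).card = 2 ^ (n - 2) := by
  intro n hn
  induction n, hn using Nat.le_induction with
  | base =>
    obtain ⟨h1, h2, h3, h4, h5⟩ := base_misc
    exact ⟨a3, F3, G3, F3part, G3part, F3irr, G3irr, h1, h2, h3,
      ⟨0, rfl⟩, by rw [h4]; norm_num, by rw [h5]; norm_num⟩
  | succ n hn IH =>
    obtain ⟨a, F, G, hF, hG, hFi, hGi, haF, haG, hI, hstar, hcF, hcG⟩ := IH
    refine ⟨lift none a, step F G a, step G F a,
      step_partition hF hG haF haG, step_partition hG hF haG haF,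
      step_irred hF hG hFi hGi haF haG hI,
      step_irred hG hF hGi hFi haG haF (by rw [Finset.inter_comm]; exact hI),
      mem_step.mpr (Or.inr (Or.inr rfl)), mem_step.mpr (Or.inr (Or.inr rfl)),
      ?_, ⟨Fin.last n, lift_last none a⟩, ?_, ?_⟩
    · -- intersection is {lift none a}
      apply Finset.Subset.antisymm
      · intro h hh
        rw [Finset.mem_inter] at hh
        obtain ⟨hh1, hh2⟩ := hh
        rw [Finset.mem_singleton]
        rcases mem_step.mp hh1 with ⟨s, hs, rfl⟩ | ⟨s, hs, rfl⟩ | rfl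
        · rcases mem_step.mp hh2 with ⟨t, ht, he⟩ | ⟨t, ht, he⟩ | he
          · have hst : s = t := lift_inj he
            have : s ∈ F ∩ G := Finset.mem_inter.mpr
              ⟨Finset.mem_of_mem_erase hs, by rw [hst]; exact Finset.mem_of_mem_erase ht⟩
            rw [hI, Finset.mem_singleton] at this
            exact absurd this (Finset.ne_of_mem_erase hs)
          · exact absurd he (lift_ne (by decide))
          · exact absurd he (lift_ne (by decide))
        · rcases mem_step.mp hh2 with ⟨t, ht, he⟩ | ⟨t, ht, he⟩ | he
          · exact absurd he (lift_ne (by decide))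
          · have hst : s = t := lift_inj he
            have : s ∈ F ∩ G := Finset.mem_inter.mpr
              ⟨by rw [hst]; exact Finset.mem_of_mem_erase ht, Finset.mem_of_mem_erase hs⟩
            rw [hI, Finset.mem_singleton] at this
            exact absurd this (Finset.ne_of_mem_erase hs)
          · exact absurd he (lift_ne (by decide))
        · rfl
      · intro h hh
        rw [Finset.mem_singleton] at hh
        subst hh
        exact Finset.mem_inter.mpr
          ⟨mem_step.mpr (Or.inr (Or.inr rfl)), mem_step.mpr (Or.inr (Or.inr rfl))⟩
    · have hc := step_count (a := a) haF haG hstar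
      rw [hcF, hcG] at hc
      rw [hc]
      exact pow_helper hn
    · have hc := step_count (a := a) haG haF hstar
      rw [hcF, hcG] at hc
      rw [hc]
      exact pow_helper hn

end SMP

/-- For every `n ≥ 3` there exists an irreducible subcube partition of
`{0,1}^n` containing exactly `2^(n-2)` points. -/
theorem exists_many_points (n : ℕ) (hn : 3 ≤ n) :
    ∃ F : Finset (Subcube n), IsSubcubePartition F ∧ IsIrreduciblePartition F ∧
      (F.filter (fun s => ∀ i : Fin n, s i ≠ none)).card = 2 ^ (n - 2) := by
  obtain ⟨a, F, G, hF, hG, hFi, hGi, -, -, -, -, hcF, -⟩ := SMP.key_ind n hn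
  exact ⟨F, hF, hFi, hcF⟩
end

section
/- For every n ≥ 3, any irreducible subcube partition of {0,1}^n has size at most (2n−1)/(3n−1) · 2^n. (This follows from Forcade's theorem that every maximal matching in the n-dimensional hypercube graph contains at least n/(3n−1) · 2^n edges.) -/
namespace ForcadeAux

variable {n : ℕ}

/-- Flip coordinate `j`. -/
def qflip (j : Fin n) (x : Fin n → Bool) : Fin n → Bool :=
  Function.update x j (!(x j))

lemma qflip_self (j : Fin n) (x : Fin n → Bool) : qflip j x j = !(x j) := by
  simp [qflip]

lemma qflip_ne_coord {j k : Fin n} (x : Fin n → Bool) (h : k ≠ j) : qflip j x k = x k := by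
  simp [qflip, Function.update_of_ne h]

lemma qflip_qflip (j : Fin n) (x : Fin n → Bool) : qflip j (qflip j x) = x := by
  funext k
  by_cases h : k = j
  · subst h; simp [qflip]
  · simp [qflip, Function.update_of_ne h]

lemma qflip_ne (j : Fin n) (x : Fin n → Bool) : qflip j x ≠ x := by
  intro h
  have := congrFun h j
  simp [qflip_self] at this

lemma qflip_comm {i j : Fin n} (h : i ≠ j) (x : Fin n → Bool) :
    qflip j (qflip i x) = qflip i (qflip j x) := by
  funext k
  by_cases hk : k = j
  · subst hk
    rw [qflip_self, qflip_ne_coord _ (Ne.symm h), qflip_ne_coord _ (Ne.symm h), qflip_self]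
  · by_cases hk2 : k = i
    · subst hk2
      rw [qflip_ne_coord _ hk, qflip_self, qflip_self, qflip_ne_coord _ hk]
    · rw [qflip_ne_coord _ hk, qflip_ne_coord _ hk2, qflip_ne_coord _ hk2, qflip_ne_coord _ hk]

/-- The full subcube determined by a point. -/
def pointCube (x : Fin n → Bool) : Subcube n := fun i => some (x i)

lemma points_pointCube (x : Fin n → Bool) : (pointCube x).points = {x} := by
  ext z
  constructor
  · intro hz
    funext i
    exact hz i (x i) rfl
  · rintro rfl
    intro i b hb
    exact Option.some_injective _ hb

/-- Points of the edge subcube. -/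
lemma points_edge (j : Fin n) (x : Fin n → Bool) :
    (Subcube.points (fun i => if i = j then none else some (x i))) = {x, qflip j x} := by
  ext z
  simp only [Subcube.points, Set.mem_setOf_eq, Set.mem_insert_iff, Set.mem_singleton_iff]
  constructor
  · intro hz
    have hz' : ∀ i, i ≠ j → z i = x i := by
      intro i hi
      exact hz i (x i) (by simp [hi])
    by_cases hj : z j = x j
    · left
      funext i
      by_cases hi : i = j
      · subst hi; exact hj
      · exact hz' i hi
    · right
      funext i
      by_cases hi : i = j
      · subst hi
        rw [qflip_self]
        cases hx : x i <;> cases hzz : z i <;> simp_all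
      · rw [qflip_ne_coord _ hi]
        exact hz' i hi
  · rintro (rfl | rfl) <;> intro i b hb
    · by_cases hi : i = j
      · simp [hi] at hb
      · simp [hi] at hb; exact hb
    · by_cases hi : i = j
      · simp [hi] at hb
      · simp [hi] at hb
        rw [qflip_ne_coord _ hi]
        exact hb

end ForcadeAux


theorem size_upper_bound {n : ℕ} (hn : 3 ≤ n) (F : Finset (Subcube n))
    (hF : IsSubcubePartition F) (hirr : IsIrreduciblePartition F) :
    (F.card : ℚ) ≤ (2 * n - 1) / (3 * n - 1) * 2 ^ n := by
  classical
  obtain ⟨hdisj, hcover⟩ := hF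
  have hn' : (3:ℚ) ≤ (n:ℚ) := by exact_mod_cast hn
  have h3n : (0:ℚ) < 3*(n:ℚ) - 1 := by linarith
  by_cases hsmall : F.card ≤ 2
  · have h2 : (F.card : ℚ) ≤ 2 := by exact_mod_cast hsmall
    refine h2.trans ?_
    rw [div_mul_eq_mul_div, le_div_iff₀ h3n]
    have hpow : (8:ℚ) ≤ 2 ^ n := by
      calc (8:ℚ) = 2^3 := by norm_num
        _ ≤ 2^n := by exact pow_le_pow_right₀ (by norm_num) hn
    nlinarith [mul_nonneg (by linarith : (0:ℚ) ≤ 2*(n:ℚ)-1) (by linarith : (0:ℚ) ≤ (2:ℚ)^n - 8)]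
  push_neg at hsmall
  -- the cell function
  have hex : ∀ x : Fin n → Bool, ∃ s, s ∈ F ∧ x ∈ Subcube.points s := by
    intro x
    have : x ∈ ⋃ s ∈ F, Subcube.points s := hcover ▸ Set.mem_univ x
    simpa using this
  set cell : (Fin n → Bool) → Subcube n := fun x => (hex x).choose with hcelldef
  have hcellF : ∀ x, cell x ∈ F := fun x => (hex x).choose_spec.1
  have hcellmem : ∀ x, x ∈ Subcube.points (cell x) := fun x => (hex x).choose_spec.2
  have huniq : ∀ x s, s ∈ F → x ∈ Subcube.points s → s = cell x := by
    intro x s hs hx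
    by_contra hne
    exact Set.disjoint_left.mp (hdisj s hs (cell x) (hcellF x) hne) hx (hcellmem x)
  set A : Finset (Fin n → Bool) :=
    Finset.univ.filter (fun x => ForcadeAux.pointCube x ∈ F) with hAdef
  have hAmem : ∀ x, x ∈ A ↔ ForcadeAux.pointCube x ∈ F := by
    intro x; simp [hAdef]
  -- independence of A
  have indep : ∀ x (j : Fin n), x ∈ A → ForcadeAux.qflip j x ∉ A := by
    intro x j hx hy
    rw [hAmem] at hx hy
    apply hirr
    have hne : ForcadeAux.pointCube x ≠ ForcadeAux.pointCube (ForcadeAux.qflip j x) := by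
      intro h
      have := congrFun h j
      simp [ForcadeAux.pointCube, ForcadeAux.qflip_self] at this
    refine ⟨{ForcadeAux.pointCube x, ForcadeAux.pointCube (ForcadeAux.qflip j x)}, ?_, ?_, ?_,
      ⟨fun i => if i = j then none else some (x i), ?_⟩⟩
    · intro s hs
      simp only [Finset.mem_insert, Finset.mem_singleton] at hs
      rcases hs with rfl | rfl <;> assumption
    · rw [Finset.card_insert_of_notMem (by simpa using hne), Finset.card_singleton]
      norm_num
    · rw [Finset.card_insert_of_notMem (by simpa using hne), Finset.card_singleton]
      exact hsmall
    · rw [Finset.set_biUnion_insert, Finset.set_biUnion_singleton,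
        ForcadeAux.points_pointCube, ForcadeAux.points_pointCube, ForcadeAux.points_edge]
      rw [Set.singleton_union]
  -- each non-A point's cell has a star
  have hstar : ∀ x, x ∉ A → (Subcube.pattern (cell x)).Nonempty := by
    intro x hx
    by_contra h
    rw [Finset.not_nonempty_iff_eq_empty] at h
    have hall : ∀ i, cell x i ≠ none := by
      intro i hi
      have : i ∈ Subcube.pattern (cell x) := by simp [Subcube.pattern, hi]
      simp [h] at this
    have hcx : cell x = ForcadeAux.pointCube x := by
      funext i
      cases hc : cell x i with
      | none => exact absurd hc (hall i)
      | some b => simp [ForcadeAux.pointCube, hcellmem x i b hc]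
    exact hx ((hAmem x).2 (hcx ▸ hcellF x))
  set idx : Subcube n → Fin n := fun s =>
    if h : (Subcube.pattern s).Nonempty then (Subcube.pattern s).min' h else ⟨0, by omega⟩
    with hidxdef
  have hidx_none : ∀ x, x ∉ A → cell x (idx (cell x)) = none := by
    intro x hx
    have h := hstar x hx
    have hmem : idx (cell x) ∈ Subcube.pattern (cell x) := by
      rw [hidxdef]
      simp only [dif_pos h]
      exact Finset.min'_mem _ h
    simpa [Subcube.pattern] using hmem
  set m : (Fin n → Bool) → (Fin n → Bool) :=
    fun x => ForcadeAux.qflip (idx (cell x)) x with hmdef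
  have hm_mem : ∀ x, x ∉ A → m x ∈ Subcube.points (cell x) := by
    intro x hx i b hb
    by_cases hi : i = idx (cell x)
    · subst hi; rw [hidx_none x hx] at hb; cases hb
    · show ForcadeAux.qflip (idx (cell x)) x i = b
      rw [ForcadeAux.qflip_ne_coord _ hi]
      exact hcellmem x i b hb
  have hcell_m : ∀ x, x ∉ A → cell (m x) = cell x :=
    fun x hx => (huniq (m x) (cell x) (hcellF x) (hm_mem x hx)).symm
  have hm_notA : ∀ x, x ∉ A → m x ∉ A := by
    intro x hx hmA
    rw [hAmem] at hmA
    have h1 : ForcadeAux.pointCube (m x) = cell (m x) :=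
      huniq (m x) _ hmA (by rw [ForcadeAux.points_pointCube]; exact rfl)
    have h2 := hcell_m x hx
    have h3 := congrFun (h1.trans h2) (idx (cell x))
    rw [hidx_none x hx] at h3
    simp [ForcadeAux.pointCube] at h3
  have hmm : ∀ x, x ∉ A → m (m x) = x := by
    intro x hx
    show ForcadeAux.qflip (idx (cell (m x))) (m x) = x
    rw [hcell_m x hx]
    exact ForcadeAux.qflip_qflip _ x
  -- counting setup
  set B : Finset (Fin n → Bool) :=
    Finset.univ.filter (fun x => ¬ ForcadeAux.pointCube x ∈ F) with hBdef
  have hBmem : ∀ x, x ∈ B ↔ x ∉ A := by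
    intro x; simp [hBdef, hAdef]
  set deg : (Fin n → Bool) → ℕ :=
    fun x => (Finset.univ.filter (fun j => ForcadeAux.qflip j x ∈ A)).card with hdegdef
  have hdeg_sum : ∀ x, deg x = ∑ j : Fin n, (if ForcadeAux.qflip j x ∈ A then 1 else 0) := by
    intro x; rw [hdegdef]; exact Finset.card_filter _ _
  have hAB : A.card + B.card = 2 ^ n := by
    have := Finset.card_filter_add_card_filter_not
      (s := (Finset.univ : Finset (Fin n → Bool))) (p := fun x => ForcadeAux.pointCube x ∈ F)
    rw [← hAdef, ← hBdef] at this
    rw [this, Finset.card_univ]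
    simp
  -- S1
  have S1 : ∑ x ∈ B, deg x = n * A.card := by
    calc ∑ x ∈ B, deg x
        = ∑ x ∈ B, ∑ j : Fin n, (if ForcadeAux.qflip j x ∈ A then 1 else 0) :=
          Finset.sum_congr rfl (fun x _ => hdeg_sum x)
      _ = ∑ j : Fin n, ∑ x ∈ B, (if ForcadeAux.qflip j x ∈ A then 1 else 0) := Finset.sum_comm
      _ = ∑ j : Fin n, A.card := by
          refine Finset.sum_congr rfl (fun j _ => ?_)
          rw [← Finset.card_filter]
          apply Finset.card_nbij' (i := fun x => ForcadeAux.qflip j x)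
            (j := fun a => ForcadeAux.qflip j a)
          · intro a ha
            exact (Finset.mem_filter.mp ha).2
          · intro a ha
            rw [Finset.mem_coe, Finset.mem_filter]
            refine ⟨(hBmem _).2 (indep a j ha), ?_⟩
            rw [ForcadeAux.qflip_qflip]
            exact ha
          · intro a _; exact ForcadeAux.qflip_qflip j a
          · intro a _; exact ForcadeAux.qflip_qflip j a
      _ = n * A.card := by simp [Finset.card_univ, mul_comm]
  -- S2
  have S2 : ∑ x ∈ B, deg (m x) = ∑ x ∈ B, deg x := by
    apply Finset.sum_nbij' (i := m) (j := m)
    · intro a ha; exact (hBmem _).2 (hm_notA a ((hBmem a).1 ha))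
    · intro a ha; exact (hBmem _).2 (hm_notA a ((hBmem a).1 ha))
    · intro a ha; exact hmm a ((hBmem a).1 ha)
    · intro a ha; exact hmm a ((hBmem a).1 ha)
    · intro a _; rfl
  -- S3
  have S3 : ∀ x ∈ B, deg x + deg (m x) ≤ n - 1 := by
    intro x hxB
    have hx : x ∉ A := (hBmem x).1 hxB
    have key : ∀ j : Fin n,
        ((if ForcadeAux.qflip j x ∈ A then 1 else 0) +
         (if ForcadeAux.qflip j (m x) ∈ A then 1 else 0) : ℕ)
        ≤ (if j = idx (cell x) then 0 else 1) := by
      intro j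
      by_cases hj : j = idx (cell x)
      · have h1 : ForcadeAux.qflip (idx (cell x)) x ∉ A := hm_notA x hx
        have h2 : ForcadeAux.qflip (idx (cell x)) (m x) ∉ A := by
          show ForcadeAux.qflip (idx (cell x)) (ForcadeAux.qflip (idx (cell x)) x) ∉ A
          rw [ForcadeAux.qflip_qflip]
          exact hx
        rw [hj, if_pos rfl, if_neg h1, if_neg h2]
      · have hdisj2 : ForcadeAux.qflip j x ∉ A ∨ ForcadeAux.qflip j (m x) ∉ A := by
          by_contra hc
          push_neg at hc
          have heq : ForcadeAux.qflip j (m x)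
              = ForcadeAux.qflip (idx (cell x)) (ForcadeAux.qflip j x) := by
            show ForcadeAux.qflip j (ForcadeAux.qflip (idx (cell x)) x) = _
            exact ForcadeAux.qflip_comm (Ne.symm hj) x
          exact indep (ForcadeAux.qflip j x) (idx (cell x)) hc.1 (heq ▸ hc.2)
        rw [if_neg hj]
        rcases hdisj2 with h | h
        · rw [if_neg h, zero_add]
          split_ifs <;> omega
        · rw [if_neg h, add_zero]
          split_ifs <;> omega
    have hsum19 : (∑ j : Fin n, if j = idx (cell x) then 0 else 1) = n - 1 := by
      rw [Finset.sum_ite, Finset.sum_const, Finset.sum_const, smul_eq_mul, smul_eq_mul,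
        mul_zero, mul_one, zero_add]
      have : Finset.univ.filter (fun j : Fin n => ¬ j = idx (cell x))
          = Finset.univ.erase (idx (cell x)) := by
        ext k; simp [Finset.mem_erase, and_comm]
      rw [this, Finset.card_erase_of_mem (Finset.mem_univ _), Finset.card_univ, Fintype.card_fin]
    calc deg x + deg (m x)
        = ∑ j : Fin n, ((if ForcadeAux.qflip j x ∈ A then 1 else 0) +
            (if ForcadeAux.qflip j (m x) ∈ A then 1 else 0)) := by
          rw [Finset.sum_add_distrib, ← hdeg_sum, ← hdeg_sum]
      _ ≤ ∑ j : Fin n, (if j = idx (cell x) then 0 else 1) :=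
          Finset.sum_le_sum (fun j _ => key j)
      _ = n - 1 := hsum19
  -- main inequality on A
  have main1 : 2 * (n * A.card) ≤ (n - 1) * B.card := by
    calc 2 * (n * A.card) = ∑ x ∈ B, deg x + ∑ x ∈ B, deg (m x) := by
          rw [S2, S1]; ring
      _ = ∑ x ∈ B, (deg x + deg (m x)) := (Finset.sum_add_distrib).symm
      _ ≤ ∑ x ∈ B, (n - 1) := Finset.sum_le_sum S3
      _ = (n - 1) * B.card := by rw [Finset.sum_const, smul_eq_mul, mul_comm]
  -- counting F
  set pts : Subcube n → Finset (Fin n → Bool) :=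
    fun s => Finset.univ.filter (fun x => x ∈ Subcube.points s) with hptsdef
  have hcover' : (Finset.univ : Finset (Fin n → Bool)) = F.biUnion pts := by
    ext z
    simp only [Finset.mem_biUnion, Finset.mem_univ, true_iff, hptsdef, Finset.mem_filter]
    obtain ⟨s, hs, hz⟩ := hex z
    exact ⟨s, hs, trivial, hz⟩
  have hdisj' : ∀ s ∈ F, ∀ t ∈ F, s ≠ t → Disjoint (pts s) (pts t) := by
    intro s hs t ht hst
    rw [Finset.disjoint_left]
    intro a ha hb
    exact Set.disjoint_left.mp (hdisj s hs t ht hst)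
      ((Finset.mem_filter.mp ha).2) ((Finset.mem_filter.mp hb).2)
  have hsum : ∑ s ∈ F, (pts s).card = 2 ^ n := by
    rw [← Finset.card_biUnion hdisj', ← hcover', Finset.card_univ]
    simp
  set P := F.filter (fun s => ∀ i, s i ≠ none) with hPdef
  set Q := F.filter (fun s => ¬ ∀ i, s i ≠ none) with hQdef
  have hPQ : P.card + Q.card = F.card :=
    Finset.card_filter_add_card_filter_not _
  have hPA : A.card = P.card := by
    apply Finset.card_bij (i := fun x _ => ForcadeAux.pointCube x)
    · intro x hx
      rw [hPdef, Finset.mem_filter]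
      exact ⟨(hAmem x).1 hx, fun i => by simp [ForcadeAux.pointCube]⟩
    · intro x _ y _ h
      funext i
      exact Option.some_injective _ (congrFun h i)
    · intro s hs
      rw [hPdef, Finset.mem_filter] at hs
      obtain ⟨hsF, hall⟩ := hs
      refine ⟨fun i => (s i).getD false, ?_, ?_⟩
      · rw [hAmem]
        have : ForcadeAux.pointCube (fun i => (s i).getD false) = s := by
          funext i
          cases hc : s i with
          | none => exact absurd hc (hall i)
          | some b => simp [ForcadeAux.pointCube, hc]
        rw [this]; exact hsF
      · funext i
        cases hc : s i with
        | none => exact absurd hc (hall i)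
        | some b => simp [ForcadeAux.pointCube, hc]
  have hptsP : ∀ s ∈ P, (pts s).card = 1 := by
    intro s hs
    rw [hPdef, Finset.mem_filter] at hs
    obtain ⟨hsF, hall⟩ := hs
    have hseq : s = ForcadeAux.pointCube (fun i => (s i).getD false) := by
      funext i
      cases hc : s i with
      | none => exact absurd hc (hall i)
      | some b => simp [ForcadeAux.pointCube, hc]
    rw [Finset.card_eq_one]
    refine ⟨fun i => (s i).getD false, ?_⟩
    ext z
    simp only [hptsdef, Finset.mem_filter, Finset.mem_univ, true_and, Finset.mem_singleton]
    rw [hseq, ForcadeAux.points_pointCube]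
    rfl
  have hptsQ : ∀ s ∈ Q, 2 ≤ (pts s).card := by
    intro s hs
    rw [hQdef, Finset.mem_filter] at hs
    obtain ⟨hsF, hnot⟩ := hs
    push_neg at hnot
    obtain ⟨i, hi⟩ := hnot
    set y : Fin n → Bool := fun k => (s k).getD false with hydef
    have hy : y ∈ Subcube.points s := by
      intro k b hb; simp [hydef, hb]
    have hy2 : ForcadeAux.qflip i y ∈ Subcube.points s := by
      intro k b hb
      by_cases hk : k = i
      · subst hk; rw [hi] at hb; cases hb
      · rw [ForcadeAux.qflip_ne_coord _ hk]; exact hy k b hb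
    have hsub : ({y, ForcadeAux.qflip i y} : Finset _) ⊆ pts s := by
      intro z hz
      simp only [Finset.mem_insert, Finset.mem_singleton] at hz
      rcases hz with rfl | rfl <;>
        simp only [hptsdef, Finset.mem_filter, Finset.mem_univ, true_and] <;>
        first | exact hy | exact hy2
    calc 2 = ({y, ForcadeAux.qflip i y} : Finset _).card :=
          (Finset.card_pair (ForcadeAux.qflip_ne i y).symm).symm
      _ ≤ (pts s).card := Finset.card_le_card hsub
  have hFbound : 2 * F.card ≤ 2 ^ n + A.card := by
    have h1 : ∑ s ∈ P, (pts s).card + ∑ s ∈ Q, (pts s).card = 2 ^ n := by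
      rw [hPdef, hQdef, Finset.sum_filter_add_sum_filter_not]; exact hsum
    have h2 : ∑ s ∈ P, (pts s).card = P.card := by
      rw [Finset.sum_congr rfl hptsP, Finset.sum_const, smul_eq_mul, mul_one]
    have h3 : 2 * Q.card ≤ ∑ s ∈ Q, (pts s).card := by
      calc 2 * Q.card = ∑ _s ∈ Q, 2 := by rw [Finset.sum_const, smul_eq_mul, mul_comm]
        _ ≤ ∑ s ∈ Q, (pts s).card := Finset.sum_le_sum hptsQ
    omega
  -- final arithmetic
  obtain ⟨p, rfl⟩ : ∃ p, n = p + 3 := ⟨n - 3, by omega⟩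
  have main1' : 2 * ((p + 3) * A.card) ≤ (p + 2) * B.card := by
    have : p + 3 - 1 = p + 2 := by omega
    rw [← this]; exact main1
  have key : (3 * p + 8) * F.card ≤ (2 * p + 5) * 2 ^ (p + 3) := by
    have c1 : (3*p+8) * (2*F.card) ≤ (3*p+8) * (2^(p+3) + A.card) :=
      Nat.mul_le_mul_left _ hFbound
    have c2 : (3*p+8) * A.card ≤ (p+2) * (2^(p+3)) := by
      have e : (3*p+8) * A.card = 2*((p+3)*A.card) + (p+2)*A.card := by ring
      rw [e]
      calc 2*((p+3)*A.card) + (p+2)*A.card ≤ (p+2)*B.card + (p+2)*A.card :=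
            Nat.add_le_add_right main1' _
        _ = (p+2) * (A.card + B.card) := by ring
        _ = (p+2) * 2^(p+3) := by rw [hAB]
    have c3 : 2 * ((3*p+8) * F.card) ≤ 2 * ((2*p+5) * 2^(p+3)) := by
      calc 2 * ((3*p+8) * F.card) = (3*p+8)*(2*F.card) := by ring
        _ ≤ (3*p+8) * (2^(p+3) + A.card) := c1
        _ = (3*p+8) * 2^(p+3) + (3*p+8)*A.card := by ring
        _ ≤ (3*p+8) * 2^(p+3) + (p+2) * 2^(p+3) := Nat.add_le_add_left c2 _
        _ = 2 * ((2*p+5) * 2^(p+3)) := by ring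
    exact Nat.le_of_mul_le_mul_left c3 (by norm_num)
  rw [div_mul_eq_mul_div, le_div_iff₀ h3n]
  have keyQ : ((3 * p + 8) * F.card : ℚ) ≤ ((2 * p + 5) * 2 ^ (p + 3) : ℚ) := by
    exact_mod_cast key
  push_cast
  push_cast at keyQ
  nlinarith [keyQ]
end

section
/- The weight vector of any (n,k)-homogeneous subcube partition of {0,1}^n equals (C(k,0), C(k,1), …, C(k,k), 0, …, 0); that is, for each h ≤ k the number of subcubes with exactly h coordinates equal to 1 is the binomial coefficient C(k,h), and there are no subcubes of weight exceeding k. -/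
open Finset

def wtp {n : ℕ} (x : Fin n → Bool) : ℕ := (Finset.univ.filter (fun i => x i = true)).card

def ptsF {n : ℕ} (s : Subcube n) (m : ℕ) : Finset (Fin n → Bool) :=
  Finset.univ.filter (fun x => (∀ i : Fin n, ∀ b : Bool, s i = some b → x i = b) ∧ wtp x = m)

lemma mem_ptsF {n : ℕ} {s : Subcube n} {m : ℕ} {x : Fin n → Bool} :
    x ∈ ptsF s m ↔ (∀ i : Fin n, ∀ b : Bool, s i = some b → x i = b) ∧ wtp x = m := by
  simp [ptsF]

lemma weight_le_wtp {n : ℕ} (s : Subcube n) (x : Fin n → Bool)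
    (hx : ∀ i : Fin n, ∀ b : Bool, s i = some b → x i = b) : s.weight ≤ wtp x := by
  apply Finset.card_le_card
  intro i hi
  simp only [Subcube.weight, mem_filter, mem_univ, true_and] at hi ⊢
  exact hx i true hi

lemma split_wtp {n : ℕ} (s : Subcube n) (x : Fin n → Bool)
    (hx : ∀ i : Fin n, ∀ b : Bool, s i = some b → x i = b) :
    (s.pattern.filter (fun i => x i = true)).card + s.weight = wtp x := by
  have hsplit := Finset.card_filter_add_card_filter_not
    (s := Finset.univ.filter (fun i => x i = true)) (p := fun i => s i = none)
  rw [filter_filter, filter_filter] at hsplit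
  have h1 : Finset.univ.filter (fun i => x i = true ∧ s i = none)
      = s.pattern.filter (fun i => x i = true) := by
    rw [Subcube.pattern, filter_filter]
    apply Finset.filter_congr
    intro i _
    tauto
  have h2 : Finset.univ.filter (fun i => x i = true ∧ ¬ s i = none)
      = Finset.univ.filter (fun i => s i = some true) := by
    apply Finset.filter_congr
    intro i _
    constructor
    · rintro ⟨hxt, hs⟩
      obtain ⟨b, hb⟩ := Option.ne_none_iff_exists'.mp hs
      rw [hb]
      rw [hx i b hb] at hxt
      rw [hxt]
    · intro h
      exact ⟨hx i true h, by simp [h]⟩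
  rw [h1, h2] at hsplit
  exact hsplit

lemma ptsF_card {n : ℕ} (s : Subcube n) (m : ℕ) (hm : s.weight ≤ m) :
    (ptsF s m).card = (s.pattern.card).choose (m - s.weight) := by
  rw [← Finset.card_powersetCard]
  apply Finset.card_bij' (fun x _ => s.pattern.filter (fun i => x i = true))
    (fun T _ => fun i => (s i).getD (decide (i ∈ T)))
  · intro x hx
    rw [mem_ptsF] at hx
    obtain ⟨hpt, hwt⟩ := hx
    rw [Finset.mem_powersetCard]
    refine ⟨Finset.filter_subset _ _, ?_⟩
    have := split_wtp s x hpt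
    omega
  · intro T hT
    rw [Finset.mem_powersetCard] at hT
    obtain ⟨hTsub, hTcard⟩ := hT
    have hpt : ∀ i : Fin n, ∀ b : Bool, s i = some b →
        (s i).getD (decide (i ∈ T)) = b := by
      intro i b hb; rw [hb]; rfl
    rw [mem_ptsF]
    refine ⟨hpt, ?_⟩
    have hTeq : s.pattern.filter (fun i => (s i).getD (decide (i ∈ T)) = true) = T := by
      ext i
      simp only [Subcube.pattern, mem_filter, mem_univ, true_and]
      constructor
      · rintro ⟨hnone, heq⟩
        rw [hnone] at heq
        simpa using heq
      · intro hiT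
        have hnone : s i = none := by
          have := hTsub hiT
          simpa [Subcube.pattern] using this
        refine ⟨hnone, ?_⟩
        rw [hnone]
        simpa using hiT
    have := split_wtp s (fun i => (s i).getD (decide (i ∈ T))) hpt
    rw [hTeq] at this
    omega
  · intro x hx
    rw [mem_ptsF] at hx
    obtain ⟨hpt, hwt⟩ := hx
    funext i
    rcases hsi : s i with _ | b
    · have hipat : i ∈ s.pattern := by simp [Subcube.pattern, hsi]
      simp only [hsi, Option.getD_none]
      by_cases hxi : x i = true
      · simp [mem_filter, hipat, hxi]
      · simp only [Bool.not_eq_true] at hxi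
        simp [mem_filter, hxi]
      -- goal: decide (i ∈ filter) = x i
    · simp only [hsi, Option.getD_some]
      exact (hpt i b hsi).symm
  · intro T hT
    rw [Finset.mem_powersetCard] at hT
    obtain ⟨hTsub, hTcard⟩ := hT
    ext i
    simp only [Subcube.pattern, mem_filter, mem_univ, true_and]
    constructor
    · rintro ⟨hnone, heq⟩
      rw [hnone] at heq
      simpa using heq
    · intro hiT
      have hnone : s i = none := by
        have := hTsub hiT
        simpa [Subcube.pattern] using this
      refine ⟨hnone, ?_⟩
      rw [hnone]
      simpa using hiT

lemma ptsF_empty {n : ℕ} (s : Subcube n) (m : ℕ) (hm : m < s.weight) :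
    ptsF s m = ∅ := by
  rw [Finset.eq_empty_iff_forall_notMem]
  intro x hx
  rw [mem_ptsF] at hx
  have := weight_le_wtp s x hx.1
  omega

lemma pattern_card_add_codim {n : ℕ} (s : Subcube n) : s.pattern.card + s.codim = n := by
  have := Finset.card_filter_add_card_filter_not
    (s := (Finset.univ : Finset (Fin n))) (p := fun i => s i = none)
  simp only [Finset.card_univ, Fintype.card_fin] at this
  rw [Subcube.pattern, Subcube.codim]
  convert this using 3

lemma sum_ptsF_card {n : ℕ} (F : Finset (Subcube n)) (hF : IsSubcubePartition F) (m : ℕ) :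
    ∑ s ∈ F, (ptsF s m).card = n.choose m := by
  classical
  have hcov : ∀ x : Fin n → Bool, ∃ s, s ∈ F ∧ x ∈ Subcube.points s := by
    intro x
    have hx : x ∈ (⋃ s ∈ F, Subcube.points s) := hF.2.symm ▸ Set.mem_univ x
    simpa [Set.mem_iUnion] using hx
  set f : (Fin n → Bool) → Subcube n := fun x => (hcov x).choose with hf
  have hf1 : ∀ x, f x ∈ F := fun x => (hcov x).choose_spec.1
  have hf2 : ∀ x, x ∈ Subcube.points (f x) := fun x => (hcov x).choose_spec.2
  have huniq : ∀ x s, s ∈ F → x ∈ Subcube.points s → f x = s := by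
    intro x s hs hxs
    by_contra hne
    exact Set.disjoint_left.mp (hF.1 _ (hf1 x) _ hs hne) (hf2 x) hxs
  have hallstar : (ptsF (fun _ => none : Subcube n) m).card = n.choose m := by
    rw [ptsF_card]
    · congr 1
      · simp [Subcube.pattern]
      · simp [Subcube.weight]
    · simp [Subcube.weight]
  rw [← hallstar]
  rw [Finset.card_eq_sum_card_fiberwise (f := f) (t := F) (fun x _ => hf1 x)]
  apply Finset.sum_congr rfl
  intro s hs
  congr 1
  ext x
  simp only [mem_filter, mem_ptsF]
  constructor
  · rintro ⟨hpts, hwt⟩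
    refine ⟨⟨fun i b hb => absurd hb (by simp), hwt⟩,
      huniq x s hs (show x ∈ Subcube.points s from hpts)⟩
  · rintro ⟨⟨_, hwt⟩, hfx⟩
    have hpts : x ∈ Subcube.points (f x) := hf2 x
    rw [hfx] at hpts
    exact ⟨hpts, hwt⟩

lemma weight_identity {n k : ℕ} (F : Finset (Subcube n)) (hF : IsSubcubePartition F)
    (hhom : ∀ s ∈ F, Subcube.codim s = k) (m : ℕ) :
    ∑ j ∈ Finset.range (m+1),
      (F.filter (fun s => Subcube.weight s = j)).card * (n-k).choose (m - j) = n.choose m := by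
  classical
  rw [← sum_ptsF_card F hF m]
  have hstep : ∑ s ∈ F, (ptsF s m).card
      = ∑ s ∈ F, (if Subcube.weight s ≤ m then (n-k).choose (m - Subcube.weight s) else 0) := by
    apply Finset.sum_congr rfl
    intro s hs
    by_cases hws : Subcube.weight s ≤ m
    · rw [if_pos hws, ptsF_card s m hws]
      have hp : s.pattern.card = n - k := by
        have := pattern_card_add_codim s
        rw [hhom s hs] at this
        omega
      rw [hp]
    · rw [if_neg hws, ptsF_empty s m (by omega)]
      simp
  rw [hstep, Finset.sum_ite, Finset.sum_const_zero, add_zero]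
  rw [← Finset.sum_fiberwise_of_maps_to (g := fun s => Subcube.weight s)
    (t := Finset.range (m+1)) (fun s hs => by
      rw [Finset.mem_filter] at hs
      exact Finset.mem_range.mpr (Nat.lt_succ_of_le hs.2))]
  apply Finset.sum_congr rfl
  intro j hj
  rw [Finset.mem_range] at hj
  have hfil : (F.filter (fun s => Subcube.weight s ≤ m)).filter (fun s => Subcube.weight s = j)
      = F.filter (fun s => Subcube.weight s = j) := by
    rw [Finset.filter_filter]
    apply Finset.filter_congr
    intro s _
    constructor
    · tauto
    · intro h; exact ⟨by omega, h⟩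
  rw [hfil]
  have hconst : ∀ s ∈ F.filter (fun s => Subcube.weight s = j),
      (n-k).choose (m - Subcube.weight s) = (n-k).choose (m - j) := fun s hs => by
    rw [(Finset.mem_filter.mp hs).2]
  rw [Finset.sum_congr rfl hconst, Finset.sum_const, smul_eq_mul]

theorem homogeneous_weight_vector' {n k : ℕ} (F : Finset (Subcube n))
    (hF : IsSubcubePartition F)
    (hhom : ∀ s ∈ F, Subcube.codim s = k) :
    ∀ h : ℕ, (F.filter (fun s => Subcube.weight s = h)).card = Nat.choose k h := by
  classical
  have hne : F.Nonempty := by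
    by_contra hc
    rw [Finset.not_nonempty_iff_eq_empty] at hc
    have h0 : (fun _ => false) ∈ (Set.univ : Set (Fin n → Bool)) := Set.mem_univ _
    rw [← hF.2, hc] at h0
    simp at h0
  obtain ⟨s0, hs0⟩ := hne
  have hkn : k ≤ n := by
    have h1 := hhom s0 hs0
    rw [Subcube.codim] at h1
    calc k = _ := h1.symm
    _ ≤ (Finset.univ : Finset (Fin n)).card := Finset.card_filter_le _ _
    _ = n := by simp
  intro h
  induction h using Nat.strong_induction_on with
  | _ h IH =>
  have key := weight_identity F hF hhom h
  have hvdm : n.choose h = ∑ j ∈ Finset.range (h+1), k.choose j * (n-k).choose (h - j) := by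
    conv_lhs => rw [← Nat.add_sub_cancel' hkn]
    rw [Nat.add_choose_eq, Finset.Nat.sum_antidiagonal_eq_sum_range_succ_mk]
  rw [hvdm, Finset.sum_range_succ] at key
  rw [Finset.sum_range_succ] at key
  have hsum : ∑ j ∈ Finset.range h,
      (F.filter (fun s => Subcube.weight s = j)).card * (n-k).choose (h - j)
      = ∑ j ∈ Finset.range h, k.choose j * (n-k).choose (h - j) :=
    Finset.sum_congr rfl (fun j hj => by rw [IH j (Finset.mem_range.mp hj)])
  rw [hsum] at key
  have := Nat.add_left_cancel key
  simpa using this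

/-- The weight vector of an `(n,k)`-homogeneous subcube partition is
binomial: exactly `C(k,h)` subcubes have weight `h` (so none have weight `> k`). -/
theorem homogeneous_weight_vector {n k : ℕ} (F : Finset (Subcube n))
    (hF : IsSubcubePartition F) (htight : IsTight F)
    (hhom : ∀ s ∈ F, Subcube.codim s = k) :
    ∀ h : ℕ, (F.filter (fun s => Subcube.weight s = h)).card = Nat.choose k h :=
  homogeneous_weight_vector' F hF hhom
end

section
/- If F is an irreducible (n,1)-homogeneous subcube partition (a tight irreducible subcube partition of {0,1}^n in which every subcube has exactly one non-star coordinate), then n = 1 and F = {0, 1}. Moreover, there exists no irreducible (n,2)-homogeneous subcube partition for any n. -/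
/-! ### auxiliary -/

lemma aux_conflict {n : ℕ} {s t : Subcube n}
    (h : Disjoint (Subcube.points s) (Subcube.points t)) :
    ∃ i b, s i = some b ∧ t i = some (!b) := by
  by_contra hc
  push_neg at hc
  set x : Fin n → Bool := fun i => ((s i).getD (((t i).getD false))) with hx
  have hxs : x ∈ Subcube.points s := by
    intro i b hb; simp [hx, hb]
  have hxt : x ∈ Subcube.points t := by
    intro i c hc'
    cases hsi : s i with
    | none => simp [hx, hsi, hc']
    | some b =>
      have hbc : c = b := by
        by_contra hne
        have hcb : c = !b := by cases b <;> cases c <;> simp_all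
        exact hc i b hsi (by rw [hc', hcb])
      simp [hx, hsi, hbc]
  exact Set.disjoint_left.mp h hxs hxt

open scoped Classical in
noncomputable def pFin {n : ℕ} (s : Subcube n) : Finset (Fin n → Bool) :=
  Finset.univ.filter (fun x => x ∈ Subcube.points s)

lemma mem_pFin {n : ℕ} {s : Subcube n} {x : Fin n → Bool} :
    x ∈ pFin s ↔ x ∈ Subcube.points s := by
  simp [pFin]

lemma aux_pattern_card {n : ℕ} (s : Subcube n) :
    s.pattern.card = n - s.codim ∧ s.codim ≤ n := by
  have h := Finset.card_filter_add_card_filter_not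
    (s := (Finset.univ : Finset (Fin n))) (p := fun i => s i = none)
  simp only [Finset.card_univ, Fintype.card_fin] at h
  have : s.pattern.card + s.codim = n := by
    unfold Subcube.pattern Subcube.codim
    convert h using 2
  omega

lemma aux_pFin_card_le {n : ℕ} (s : Subcube n) :
    (pFin s).card ≤ 2 ^ (n - s.codim) := by
  classical
  have hinj : Set.InjOn (fun (x : Fin n → Bool) (i : {i // i ∈ s.pattern}) => x i.1)
      (pFin s) := by
    intro x hx y hy hxy
    simp only [Finset.mem_coe, mem_pFin] at hx hy
    funext i
    cases hsi : s i with
    | none =>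
      have hip : i ∈ s.pattern := by simp [Subcube.pattern, hsi]
      exact congrFun hxy ⟨i, hip⟩
    | some b => rw [hx i b hsi, hy i b hsi]
  calc (pFin s).card
      ≤ (Finset.univ : Finset ({i // i ∈ s.pattern} → Bool)).card := by
        apply Finset.card_le_card_of_injOn _ (fun x _ => Finset.mem_univ _) hinj
    _ = 2 ^ s.pattern.card := by
        rw [Finset.card_univ, Fintype.card_fun]
        simp [Fintype.card_coe]
    _ = 2 ^ (n - s.codim) := by rw [(aux_pattern_card s).1]

lemma aux_F_card_ge {n k : ℕ} {F : Finset (Subcube n)}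
    (hcover : (⋃ s ∈ F, Subcube.points s) = Set.univ)
    (hcod : ∀ s ∈ F, Subcube.codim s = k) : 2 ^ k ≤ F.card := by
  classical
  have hx0 : (fun _ => false : Fin n → Bool) ∈ ⋃ s ∈ F, Subcube.points s := by
    rw [hcover]; trivial
  simp only [Set.mem_iUnion] at hx0
  obtain ⟨s0, hs0F, -⟩ := hx0
  have hkn : k ≤ n := by
    rw [← hcod s0 hs0F]; exact (aux_pattern_card s0).2
  have hsub : (Finset.univ : Finset (Fin n → Bool)) ⊆ F.biUnion (fun s => pFin s) := by
    intro x _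
    have hx : x ∈ ⋃ s ∈ F, Subcube.points s := by rw [hcover]; trivial
    simp only [Set.mem_iUnion] at hx
    obtain ⟨s, hsF, hxs⟩ := hx
    exact Finset.mem_biUnion.2 ⟨s, hsF, mem_pFin.2 hxs⟩
  have h1 : 2 ^ n ≤ ∑ s ∈ F, (pFin s).card :=
    calc 2 ^ n = (Finset.univ : Finset (Fin n → Bool)).card := by
          rw [Finset.card_univ, Fintype.card_fun]; simp
      _ ≤ (F.biUnion (fun s => pFin s)).card := Finset.card_le_card hsub
      _ ≤ ∑ s ∈ F, (pFin s).card := Finset.card_biUnion_le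
  have h2 : ∑ s ∈ F, (pFin s).card ≤ F.card * 2 ^ (n - k) := by
    apply Finset.sum_le_card_nsmul
    intro s hs
    have := aux_pFin_card_le s
    rwa [hcod s hs] at this
  have h3 : 2 ^ k * 2 ^ (n - k) ≤ F.card * 2 ^ (n - k) := by
    rw [← pow_add, Nat.add_sub_cancel' hkn]
    exact le_trans h1 h2
  exact Nat.le_of_mul_le_mul_right h3 (Nat.pow_pos (by norm_num))

lemma aux_fixed_eq {n : ℕ} {s : Subcube n} {a c : Fin n}
    (hsc : Subcube.codim s = 2) (hac : a ≠ c)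
    (hsa : s a ≠ none) (hsc' : s c ≠ none) :
    ∀ i, s i ≠ none → i = a ∨ i = c := by
  classical
  have hsub : ({a, c} : Finset (Fin n)) ⊆
      Finset.univ.filter (fun i => s i ≠ none) := by
    intro i hi
    simp only [Finset.mem_insert, Finset.mem_singleton] at hi
    rcases hi with rfl | rfl <;> simp [hsa, hsc']
  have hcard : (Finset.univ.filter (fun i => s i ≠ none)).card ≤
      ({a, c} : Finset (Fin n)).card := by
    rw [Finset.card_insert_of_notMem (by simpa using hac), Finset.card_singleton]
    exact le_of_eq hsc
  have heq := Finset.eq_of_subset_of_card_le hsub hcard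
  intro i hi
  have : i ∈ ({a, c} : Finset (Fin n)) := by
    rw [heq]; simp [hi]
  simpa using this

lemma aux_union_pair {n : ℕ} {s t : Subcube n} {a c : Fin n} {w v : Bool}
    (hsc2 : Subcube.codim s = 2) (htc2 : Subcube.codim t = 2) (hac : a ≠ c)
    (hsa : s a = some w) (hta : t a = some w)
    (hscv : s c = some v) (htcv : t c = some (!v)) :
    Subcube.points s ∪ Subcube.points t =
      Subcube.points (fun i => if i = a then some w else none) := by
  have hsfix := aux_fixed_eq hsc2 hac (by simp [hsa]) (by simp [hscv])
  have htfix := aux_fixed_eq htc2 hac (by simp [hta]) (by simp [htcv])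
  ext x
  constructor
  · rintro (hx | hx) <;>
    · intro i b hib
      by_cases hia : i = a
      · subst hia
        have hbw : b = w := by simpa using hib.symm
        subst hbw
        first
          | exact hx _ _ hsa
          | exact hx _ _ hta
      · simp [hia] at hib
  · intro hx
    have hxa : x a = w := hx a w (by simp)
    by_cases hxc : x c = v
    · left
      intro i b hib
      rcases hsfix i (by simp [hib]) with rfl | rfl
      · rw [hsa] at hib; exact Option.some.inj hib ▸ hxa
      · rw [hscv] at hib; exact Option.some.inj hib ▸ hxc
    · right
      intro i b hib
      have hxc' : x c = !v := by cases v <;> simp_all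
      rcases htfix i (by simp [hib]) with rfl | rfl
      · rw [hta] at hib; exact Option.some.inj hib ▸ hxa
      · rw [htcv] at hib; exact Option.some.inj hib ▸ hxc'

lemma aux_no_pair {n : ℕ} {F : Finset (Subcube n)}
    (hdisj : ∀ s ∈ F, ∀ t ∈ F, s ≠ t →
      Disjoint (Subcube.points s) (Subcube.points t))
    (hirr : IsIrreduciblePartition F) (hcard : 4 ≤ F.card)
    (hcod : ∀ s ∈ F, Subcube.codim s = 2)
    {s t : Subcube n} (hs : s ∈ F) (ht : t ∈ F) (hst : s ≠ t)
    {a : Fin n} {w : Bool} (hsa : s a = some w) (hta : t a = some w) : False := by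
  obtain ⟨c, v, hscv, htcv⟩ := aux_conflict (hdisj s hs t ht hst)
  have hca : a ≠ c := by
    rintro rfl
    rw [hsa] at hscv
    rw [hta] at htcv
    have h1 := Option.some.inj hscv
    have h2 := Option.some.inj htcv
    rw [← h1] at h2
    cases w <;> simp at h2
  have huni := aux_union_pair (hcod s hs) (hcod t ht) hca hsa hta hscv htcv
  apply hirr
  refine ⟨{s, t}, ?_, ?_, ?_, ⟨fun i => if i = a then some w else none, ?_⟩⟩
  · intro x hx
    simp only [Finset.mem_insert, Finset.mem_singleton] at hx
    rcases hx with rfl | rfl <;> assumption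
  · rw [Finset.card_insert_of_notMem (Finset.notMem_singleton.mpr hst),
      Finset.card_singleton]
    norm_num
  · rw [Finset.card_insert_of_notMem (Finset.notMem_singleton.mpr hst),
      Finset.card_singleton]
    omega
  · rw [Finset.set_biUnion_insert, Finset.set_biUnion_singleton]
    exact huni


/-- An irreducible `(n,1)`-homogeneous subcube partition forces `n = 1`
and `F = {0, 1}`; and there is no irreducible `(n,2)`-homogeneous subcube partition. -/
theorem homogeneous_codim_one_and_two :
    (∀ (n : ℕ) (F : Finset (Subcube n)), IsSubcubePartition F → IsTight F →
      IsIrreduciblePartition F → (∀ s ∈ F, Subcube.codim s = 1) →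
      n = 1 ∧ F = {(fun _ => some false : Subcube n), (fun _ => some true : Subcube n)}) ∧
    (∀ (n : ℕ), ¬ ∃ F : Finset (Subcube n), IsSubcubePartition F ∧ IsTight F ∧
      IsIrreduciblePartition F ∧ (∀ s ∈ F, Subcube.codim s = 2)) := by
  constructor
  · -- codim 1 case
    intro n F hpart htight hirr hcod
    obtain ⟨hdisj, hcover⟩ := hpart
    have hF2 : 2 ≤ F.card := by
      have := aux_F_card_ge hcover hcod
      simpa using this
    obtain ⟨s, hs, t, ht, hst⟩ := Finset.one_lt_card.mp (show 1 < F.card by omega)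
    -- structure of codim-1 subcubes
    have hfix1 : ∀ u ∈ F, ∃ i b, u i = some b ∧ ∀ j, u j ≠ none → j = i := by
      intro u hu
      have h1 := hcod u hu
      unfold Subcube.codim at h1
      obtain ⟨i, hi⟩ := Finset.card_eq_one.mp h1
      have hiu : u i ≠ none := by
        have : i ∈ Finset.univ.filter (fun j => u j ≠ none) := by rw [hi]; simp
        simpa using this
      obtain ⟨b, hb⟩ := Option.ne_none_iff_exists'.mp hiu
      refine ⟨i, b, hb, fun j hj => ?_⟩
      have : j ∈ Finset.univ.filter (fun j => u j ≠ none) := by simp [hj]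
      rw [hi] at this; simpa using this
    obtain ⟨i, b, hsib, hsfix⟩ := hfix1 s hs
    obtain ⟨j, c, htjc, htfix⟩ := hfix1 t ht
    obtain ⟨m, d, hsm, htm⟩ := aux_conflict (hdisj s hs t ht hst)
    have hmi : m = i := hsfix m (by simp [hsm])
    have hmj : m = j := htfix m (by simp [htm])
    have hji : j = i := hmj.symm.trans hmi
    rw [hmi] at hsm htm
    rw [hji] at htjc htfix
    have hbd : b = d := Option.some.inj (hsib.symm.trans hsm)
    have hcb : c = !b := by rw [hbd]; exact Option.some.inj (htjc.symm.trans htm)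
    rw [hcb] at htjc
    -- F = {s, t}
    have hFst : F = {s, t} := by
      apply Finset.Subset.antisymm
      · intro u hu
        simp only [Finset.mem_insert, Finset.mem_singleton]
        by_contra hne
        push_neg at hne
        obtain ⟨hus, hut⟩ := hne
        obtain ⟨m1, d1, hum1, hsm1⟩ := aux_conflict (hdisj u hu s hs hus)
        obtain ⟨m2, d2, hum2, htm2⟩ := aux_conflict (hdisj u hu t ht hut)
        have h1 : m1 = i := hsfix m1 (by simp [hsm1])
        have h2 : m2 = i := htfix m2 (by simp [htm2])
        rw [h1] at hum1 hsm1
        rw [h2] at hum2 htm2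
        have e1 : (!d1) = b := Option.some.inj (hsm1.symm.trans hsib)
        have e2 : (!d2) = (!b) := Option.some.inj (htm2.symm.trans htjc)
        have ed : d1 = d2 := Option.some.inj (hum1.symm.trans hum2)
        cases b <;> cases d1 <;> cases d2 <;> simp_all
      · intro u hu
        simp only [Finset.mem_insert, Finset.mem_singleton] at hu
        rcases hu with rfl | rfl <;> assumption
    -- every coordinate equals i
    have halli : ∀ j' : Fin n, j' = i := by
      intro j'
      obtain ⟨u, hu, huj⟩ := htight j'
      rw [hFst] at hu
      simp only [Finset.mem_insert, Finset.mem_singleton] at hu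
      rcases hu with rfl | rfl
      · exact hsfix j' huj
      · exact htfix j' huj
    have hn1 : n = 1 := by
      have h0 : 0 < n := i.pos
      have hle : n ≤ 1 := by
        by_contra hgt
        push_neg at hgt
        have h01 : (⟨0, by omega⟩ : Fin n) = i := halli _
        have h11 : (⟨1, by omega⟩ : Fin n) = i := halli _
        rw [← h11] at h01
        simp [Fin.ext_iff] at h01
      omega
    refine ⟨hn1, ?_⟩
    have hseq : s = fun _ => some b := by
      funext j'; rw [halli j']; exact hsib
    have hteq : t = fun _ => some (!b) := by
      funext j'; rw [halli j']; exact htjc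
    rw [hFst, hseq, hteq]
    cases b
    · rfl
    · simp only [Bool.not_true]
      exact Finset.pair_comm _ _
  · -- codim 2 case
    intro n
    rintro ⟨F, ⟨hdisj, hcover⟩, htight, hirr, hcod⟩
    have hF4 : 4 ≤ F.card := by
      have := aux_F_card_ge hcover hcod
      simpa using this
    -- pick s1 and three others
    obtain ⟨s1, hs1⟩ := Finset.card_pos.mp (show 0 < F.card by omega)
    have h1 : 3 ≤ (F.erase s1).card := by
      rw [Finset.card_erase_of_mem hs1]; omega
    obtain ⟨s2, hs2⟩ := Finset.card_pos.mp (by omega : 0 < (F.erase s1).card)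
    have h2 : 2 ≤ ((F.erase s1).erase s2).card := by
      rw [Finset.card_erase_of_mem hs2]; omega
    obtain ⟨s3, hs3⟩ := Finset.card_pos.mp (by omega : 0 < ((F.erase s1).erase s2).card)
    -- memberships and distinctness
    have hs2F : s2 ∈ F := Finset.mem_of_mem_erase hs2
    have hs21 : s2 ≠ s1 := Finset.ne_of_mem_erase hs2
    have hs3e : s3 ∈ F.erase s1 := Finset.mem_of_mem_erase hs3
    have hs3F : s3 ∈ F := Finset.mem_of_mem_erase hs3e
    have hs31 : s3 ≠ s1 := Finset.ne_of_mem_erase hs3e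
    have hs32 : s3 ≠ s2 := Finset.ne_of_mem_erase hs3
    obtain ⟨s4', hs4'⟩ := Finset.card_pos.mp
      (by rw [Finset.card_erase_of_mem hs3]; omega : 0 < (((F.erase s1).erase s2).erase s3).card)
    have hs4e2 : s4' ∈ (F.erase s1).erase s2 := Finset.mem_of_mem_erase hs4'
    have hs4e1 : s4' ∈ F.erase s1 := Finset.mem_of_mem_erase hs4e2
    have hs4F : s4' ∈ F := Finset.mem_of_mem_erase hs4e1
    have hs41 : s4' ≠ s1 := Finset.ne_of_mem_erase hs4e1
    have hs42 : s4' ≠ s2 := Finset.ne_of_mem_erase hs4e2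
    have hs43 : s4' ≠ s3 := Finset.ne_of_mem_erase hs4'
    -- fixed coordinates of s1
    have hcod1 := hcod s1 hs1
    unfold Subcube.codim at hcod1
    obtain ⟨α, β, hαβ, hfs1⟩ := Finset.card_eq_two.mp hcod1
    have hαfix : s1 α ≠ none := by
      have : α ∈ Finset.univ.filter (fun i => s1 i ≠ none) := by rw [hfs1]; simp
      simpa using this
    have hβfix : s1 β ≠ none := by
      have : β ∈ Finset.univ.filter (fun i => s1 i ≠ none) := by rw [hfs1]; simp
      simpa using this
    obtain ⟨bα, hbα⟩ := Option.ne_none_iff_exists'.mp hαfix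
    obtain ⟨bβ, hbβ⟩ := Option.ne_none_iff_exists'.mp hβfix
    -- each other subcube conflicts with s1 at α or β
    have hconf : ∀ u ∈ F, u ≠ s1 → u α = some (!bα) ∨ u β = some (!bβ) := by
      intro u hu hune
      obtain ⟨m, d, hs1m, hum⟩ := aux_conflict (hdisj s1 hs1 u hu (Ne.symm hune))
      have hm : m ∈ ({α, β} : Finset (Fin n)) := by
        rw [← hfs1]; simp [hs1m]
      simp only [Finset.mem_insert, Finset.mem_singleton] at hm
      rcases hm with rfl | rfl
      · left
        have : d = bα := Option.some.inj (hs1m.symm.trans hbα)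
        rw [hum, this]
      · right
        have : d = bβ := Option.some.inj (hs1m.symm.trans hbβ)
        rw [hum, this]
    have hc2 := hconf s2 hs2F hs21
    have hc3 := hconf s3 hs3F hs31
    have hc4 := hconf s4' hs4F hs41
    rcases hc2 with h2α | h2β <;> rcases hc3 with h3α | h3β <;> rcases hc4 with h4α | h4β
    · exact aux_no_pair hdisj hirr hF4 hcod hs2F hs3F hs32.symm h2α h3α
    · exact aux_no_pair hdisj hirr hF4 hcod hs2F hs3F hs32.symm h2α h3α
    · exact aux_no_pair hdisj hirr hF4 hcod hs2F hs4F hs42.symm h2α h4α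
    · exact aux_no_pair hdisj hirr hF4 hcod hs3F hs4F hs43.symm h3β h4β
    · exact aux_no_pair hdisj hirr hF4 hcod hs3F hs4F hs43.symm h3α h4α
    · exact aux_no_pair hdisj hirr hF4 hcod hs2F hs4F hs42.symm h2β h4β
    · exact aux_no_pair hdisj hirr hF4 hcod hs2F hs3F hs32.symm h2β h3β
    · exact aux_no_pair hdisj hirr hF4 hcod hs2F hs3F hs32.symm h2β h3β
end

section
/- Every tight minimal subcube cover of {0,…,q−1}^n with n ≥ 1 and q ≥ 2 has size at least (q−1)n + 1. In particular, every tight subcube partition of {0,…,q−1}^n has size at least (q−1)n + 1. -/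
/-- A subcube of `{0,…,q-1}^n`, given as a word over `{0,…,q-1,*}` (`none` is `*`). -/
abbrev QSubcube (n q : ℕ) := Fin n → Option (Fin q)

/-- The set of points covered by a subcube of `{0,…,q-1}^n`. -/
def QSubcube.points {n q : ℕ} (s : QSubcube n q) : Set (Fin n → Fin q) :=
  {x | ∀ i : Fin n, ∀ b : Fin q, s i = some b → x i = b}

/-- A subcube cover: a collection of subcubes whose union is the whole cube. -/
def IsQCover {n q : ℕ} (F : Finset (QSubcube n q)) : Prop :=
  (⋃ s ∈ F, QSubcube.points s) = Set.univ

/-- A minimal subcube cover: no proper subset is a cover. -/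
def IsMinimalQCover {n q : ℕ} (F : Finset (QSubcube n q)) : Prop :=
  IsQCover F ∧ ∀ G ⊂ F, ¬ IsQCover G

/-- Tightness: every coordinate is mentioned by some subcube. -/
def IsQTight {n q : ℕ} (F : Finset (QSubcube n q)) : Prop :=
  ∀ i : Fin n, ∃ s ∈ F, s i ≠ none

/-- A subcube partition of `{0,…,q-1}^n`. -/
def IsQPartition {n q : ℕ} (F : Finset (QSubcube n q)) : Prop :=
  (∀ s ∈ F, ∀ t ∈ F, s ≠ t → Disjoint (QSubcube.points s) (QSubcube.points t)) ∧
  IsQCover F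

section Aux

open Finset

variable {n q : ℕ}

private lemma cover_point {F : Finset (QSubcube n q)} (h : IsQCover F)
    (x : Fin n → Fin q) : ∃ s ∈ F, x ∈ QSubcube.points s := by
  have hx : x ∈ ⋃ s ∈ F, QSubcube.points s := h ▸ Set.mem_univ x
  simpa using hx

/-- Hall-type lemma: if `G` covers the slice `{x : x|_C = z|_C}`, then there is a
subfamily `T` that is "dense" relative to the coordinates outside `C` it fixes. -/
private lemma exists_violator (hq : 2 ≤ q) (C : Finset (Fin n)) (z : Fin n → Fin q)
    (G : Finset (QSubcube n q))
    (hcov : ∀ x : Fin n → Fin q, (∀ i ∈ C, x i = z i) → ∃ s ∈ G, x ∈ QSubcube.points s) :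
    ∃ T ⊆ G, T.Nonempty ∧
      (q - 1) * (T.biUnion (fun s =>
        Finset.univ.filter (fun i => s i ≠ none ∧ i ∉ C))).card + 1 ≤ T.card := by
  classical
  by_contra hno
  push_neg at hno
  -- Hall condition holds for the bipartite graph (cubes of G) vs (coordinate, slot) pairs
  set fx : QSubcube n q → Finset (Fin n) :=
    fun s => Finset.univ.filter (fun i => s i ≠ none ∧ i ∉ C) with hfx
  set t : {s // s ∈ G} → Finset (Fin n × Fin (q - 1)) :=
    fun s => (fx s.1) ×ˢ Finset.univ with ht
  have hall : ∀ A : Finset {s // s ∈ G}, A.card ≤ (A.biUnion t).card := by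
    intro A
    rcases A.eq_empty_or_nonempty with hA | hA
    · simp [hA]
    · have hTG : A.image Subtype.val ⊆ G := by
        intro s hs
        obtain ⟨⟨s', hs'⟩, _, rfl⟩ := mem_image.mp hs
        exact hs'
      have hT := hno _ hTG (hA.image _)
      have hcard : (A.image Subtype.val).card = A.card :=
        card_image_of_injective _ Subtype.val_injective
      have hbi : A.biUnion t = ((A.image Subtype.val).biUnion fx) ×ˢ Finset.univ := by
        ext p
        constructor
        · intro hp
          obtain ⟨σ, hσ, hpσ⟩ := mem_biUnion.mp hp
          simp only [ht] at hpσ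
          rw [mem_product] at hpσ ⊢
          exact ⟨mem_biUnion.mpr ⟨σ.1, mem_image_of_mem _ hσ, hpσ.1⟩, hpσ.2⟩
        · intro hp
          rw [mem_product] at hp
          obtain ⟨hp1, hp2⟩ := hp
          obtain ⟨s, hs, hps⟩ := mem_biUnion.mp hp1
          obtain ⟨σ, hσ, rfl⟩ := mem_image.mp hs
          refine mem_biUnion.mpr ⟨σ, hσ, ?_⟩
          simp only [ht]
          exact mem_product.mpr ⟨hps, hp2⟩
      rw [hbi, card_product, card_univ, Fintype.card_fin]
      have : (A.image Subtype.val).card ≤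
          (q - 1) * ((A.image Subtype.val).biUnion fx).card := by omega
      rw [hcard] at this
      calc A.card ≤ (q - 1) * ((A.image Subtype.val).biUnion fx).card := this
        _ = ((A.image Subtype.val).biUnion fx).card * (q - 1) := Nat.mul_comm _ _
  obtain ⟨f, finj, hf⟩ := (Finset.all_card_le_biUnion_card_iff_exists_injective t).mp hall
  -- forbidden values at each coordinate
  set d0 : Fin q := ⟨0, by omega⟩ with hd0
  set forb : Fin n → Finset (Fin q) := fun i =>
    (G.attach.filter (fun s => (f s).1 = i)).image (fun s => (s.1 i).getD d0) with hforbdef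
  have hforb : ∀ i, (forb i).card < q := by
    intro i
    have h1 : (forb i).card ≤ (G.attach.filter (fun s => (f s).1 = i)).card :=
      card_image_le
    have h2 : (G.attach.filter (fun s => (f s).1 = i)).card ≤ q - 1 := by
      have : (G.attach.filter (fun s => (f s).1 = i)).card ≤
          (Finset.univ : Finset (Fin (q - 1))).card := by
        apply Finset.card_le_card_of_injOn (fun s => (f s).2)
        · intro _ _; exact mem_univ _
        · intro a ha b hb hab
          have ha' := (mem_filter.mp ha).2
          have hb' := (mem_filter.mp hb).2
          apply finj
          exact Prod.ext (ha'.trans hb'.symm) hab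
      simpa using this
    omega
  have hyex : ∀ i, ∃ b : Fin q, b ∉ forb i := by
    intro i
    by_contra hc
    push_neg at hc
    have huniv : forb i = Finset.univ := eq_univ_iff_forall.mpr hc
    have hlt := hforb i
    rw [huniv, card_univ, Fintype.card_fin] at hlt
    omega
  set x : Fin n → Fin q := fun i => if i ∈ C then z i else Classical.choose (hyex i) with hxdef
  obtain ⟨s, hsG, hxs⟩ := hcov x (fun i hi => by simp [hxdef, if_pos hi])
  set σ : {s // s ∈ G} := ⟨s, hsG⟩ with hσ
  have hfσ := hf σ
  rw [ht, mem_product] at hfσ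
  obtain ⟨hfix, -⟩ := hfσ
  rw [hfx, mem_filter] at hfix
  obtain ⟨-, hne, hnotC⟩ := hfix
  obtain ⟨b, hb⟩ := Option.ne_none_iff_exists'.mp hne
  have hxv : x (f σ).1 = b := hxs (f σ).1 b hb
  have hxy : x (f σ).1 = Classical.choose (hyex (f σ).1) := by
    simp [hxdef, if_neg hnotC]
  have hbmem : b ∈ forb (f σ).1 := by
    rw [hforbdef]
    apply mem_image.mpr
    refine ⟨σ, mem_filter.mpr ⟨mem_attach _ _, rfl⟩, ?_⟩
    have hb' : s (f σ).1 = some b := hb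
    show (s (f σ).1).getD d0 = b
    simp [hb']
  have := Classical.choose_spec (hyex (f σ).1)
  rw [← hxy, hxv] at this
  exact this hbmem

private lemma main_rec (hn : 1 ≤ n) (hq : 2 ≤ q) (F : Finset (QSubcube n q))
    (htight : IsQTight F) (hmin : IsMinimalQCover F) :
    ∀ (k : ℕ) (C : Finset (Fin n)) (U : Finset (QSubcube n q)),
      U ⊆ F → (∀ s ∈ U, ∀ i : Fin n, s i ≠ none → i ∈ C) →
      (q - 1) * C.card + (if C = ∅ then 0 else 1) ≤ U.card →
      n ≤ C.card + k → (q - 1) * n + 1 ≤ F.card := by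
  classical
  have base : ∀ (C : Finset (Fin n)) (U : Finset (QSubcube n q)), C = Finset.univ →
      U ⊆ F → (q - 1) * C.card + (if C = ∅ then 0 else 1) ≤ U.card →
      (q - 1) * n + 1 ≤ F.card := by
    intro C U hCu hUF hcard
    subst hCu
    have hCne : (Finset.univ : Finset (Fin n)) ≠ ∅ := by
      have : Nonempty (Fin n) := ⟨⟨0, by omega⟩⟩
      simp [Finset.univ_nonempty.ne_empty]
    rw [if_neg hCne, card_univ, Fintype.card_fin] at hcard
    exact hcard.trans (card_le_card hUF)
  intro k
  induction k with
  | zero =>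
    intro C U hUF _ hcard hnk
    have hCcard : C.card ≤ n := by
      have := card_le_card (subset_univ C)
      simpa using this
    exact base C U (eq_univ_of_card C (by simp; omega)) hUF hcard
  | succ k ih =>
    intro C U hUF hfix hcard hnk
    by_cases hCu : C = Finset.univ
    · exact base C U hCu hUF hcard
    · -- find z not covered by any cube fixing only coordinates of C
      have hz : ∃ z : Fin n → Fin q, ∀ s ∈ F,
          (∀ i : Fin n, s i ≠ none → i ∈ C) → z ∉ QSubcube.points s := by
        by_contra hno
        push_neg at hno
        set TC := F.filter (fun s => ∀ i : Fin n, s i ≠ none → i ∈ C) with hTC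
        have hTCcover : IsQCover TC := by
          apply Set.eq_univ_of_forall
          intro x
          obtain ⟨s, hsF, hfix', hx⟩ := hno x
          exact Set.mem_biUnion (mem_filter.mpr ⟨hsF, hfix'⟩) hx
        have hsub : TC ⊆ F := filter_subset _ _
        have hTCF : TC = F := by
          by_contra hne
          exact hmin.2 TC (lt_of_le_of_ne hsub hne) hTCcover
        obtain ⟨i, hi⟩ : ∃ i : Fin n, i ∉ C := by
          by_contra hc
          push_neg at hc
          exact hCu (eq_univ_iff_forall.mpr hc)
        obtain ⟨s, hsF, hsi⟩ := htight i
        rw [← hTCF] at hsF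
        exact hi ((mem_filter.mp hsF).2 i hsi)
      obtain ⟨z, hz⟩ := hz
      set G := F.filter (fun s => ∀ i ∈ C, ∀ b : Fin q, s i = some b → z i = b) with hGdef
      have hGfix : ∀ s ∈ G, ∃ i : Fin n, s i ≠ none ∧ i ∉ C := by
        intro s hs
        by_contra hc
        push_neg at hc
        obtain ⟨hsF, hcompat⟩ := mem_filter.mp hs
        apply hz s hsF hc
        intro i b hib
        exact hcompat i (hc i (by simp [hib])) b hib
      have hcovslice : ∀ x : Fin n → Fin q, (∀ i ∈ C, x i = z i) →
          ∃ s ∈ G, x ∈ QSubcube.points s := by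
        intro x hx
        obtain ⟨s, hsF, hxs⟩ := cover_point hmin.1 x
        refine ⟨s, mem_filter.mpr ⟨hsF, ?_⟩, hxs⟩
        intro i hiC b hib
        rw [← hx i hiC]
        exact hxs i b hib
      obtain ⟨T, hTG, hTne, hTcard⟩ := exists_violator hq C z G hcovslice
      set N := T.biUnion (fun s => Finset.univ.filter (fun i => s i ≠ none ∧ i ∉ C)) with hNdef
      have hNne : N.Nonempty := by
        obtain ⟨s, hsT⟩ := hTne
        obtain ⟨i, h1, h2⟩ := hGfix s (hTG hsT)
        exact ⟨i, mem_biUnion.mpr ⟨s, hsT, mem_filter.mpr ⟨mem_univ _, h1, h2⟩⟩⟩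
      have hdisj : Disjoint U T := by
        rw [disjoint_left]
        intro s hsU hsT
        obtain ⟨i, h1, h2⟩ := hGfix s (hTG hsT)
        exact h2 (hfix s hsU i h1)
      have hCN : Disjoint C N := by
        rw [disjoint_right]
        intro i hiN hiC
        obtain ⟨s, _, hi⟩ := mem_biUnion.mp hiN
        exact (mem_filter.mp hi).2.2 hiC
      apply ih (C ∪ N) (U ∪ T)
      · exact union_subset hUF (hTG.trans (filter_subset _ _))
      · intro s hs i hsi
        rcases mem_union.mp hs with h | h
        · exact mem_union_left _ (hfix s h i hsi)
        · by_cases hiC : i ∈ C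
          · exact mem_union_left _ hiC
          · exact mem_union_right _
              (mem_biUnion.mpr ⟨s, h, mem_filter.mpr ⟨mem_univ _, hsi, hiC⟩⟩)
      · have h1 : (U ∪ T).card = U.card + T.card := card_union_of_disjoint hdisj
        have h2 : (C ∪ N).card ≤ C.card + N.card := card_union_le _ _
        have h3 : C ∪ N ≠ ∅ := by
          obtain ⟨i, hi⟩ := hNne
          exact Finset.ne_empty_of_mem (mem_union_right _ hi)
        rw [if_neg h3, h1]
        have hU : (q - 1) * C.card ≤ U.card := by
          rcases eq_or_ne C ∅ with h | h
          · simp [h]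
          · rw [if_neg h] at hcard; omega
        calc (q - 1) * (C ∪ N).card + 1 ≤ (q - 1) * (C.card + N.card) + 1 := by
              have := Nat.mul_le_mul_left (q - 1) h2; omega
          _ = (q - 1) * C.card + ((q - 1) * N.card + 1) := by ring
          _ ≤ U.card + T.card := Nat.add_le_add hU hTcard
      · have : C.card + 1 ≤ (C ∪ N).card := by
          rw [card_union_of_disjoint hCN]
          have := hNne.card_pos
          omega
        omega

private lemma partition_isMinimalCover (hq : 2 ≤ q) {F : Finset (QSubcube n q)}
    (hp : IsQPartition F) : IsMinimalQCover F := by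
  refine ⟨hp.2, ?_⟩
  intro G hGF hGcov
  obtain ⟨s, hsF, hsG⟩ := Finset.exists_of_ssubset hGF
  set p : Fin n → Fin q := fun i => (s i).getD ⟨0, by omega⟩ with hpdef
  have hps : p ∈ QSubcube.points s := by
    intro i b hb
    simp [hpdef, hb]
  obtain ⟨t, htG, hpt⟩ := cover_point hGcov p
  have htF : t ∈ F := hGF.subset htG
  have hne : s ≠ t := fun h => hsG (h ▸ htG)
  exact absurd hpt (Set.disjoint_left.mp (hp.1 s hsF t htF hne) hps)

end Aux

/-- Every tight minimal subcube cover of `{0,…,q-1}^n` (`n ≥ 1`,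
`q ≥ 2`) has size at least `(q-1)n + 1`; in particular, so does every tight subcube
partition. -/
theorem tight_cover_lower_bound (n q : ℕ) (hn : 1 ≤ n) (hq : 2 ≤ q) :
    (∀ F : Finset (QSubcube n q), IsQTight F → IsMinimalQCover F →
      (q - 1) * n + 1 ≤ F.card) ∧
    (∀ F : Finset (QSubcube n q), IsQTight F → IsQPartition F →
      (q - 1) * n + 1 ≤ F.card) := by
  constructor
  · intro F ht hm
    exact main_rec hn hq F ht hm n ∅ ∅ (Finset.empty_subset _) (by simp) (by simp)
      (by omega)
  · intro F ht hp
    exact main_rec hn hq F ht (partition_isMinimalCover hq hp) n ∅ ∅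
      (Finset.empty_subset _) (by simp) (by simp) (by omega)
end

section
/- Every tight affine vector space partition of F_2^n with n ≥ 1 has size at least n + 1. -/
open Module

namespace TightAVSP

variable {E : Type*} [AddCommGroup E] [Module (ZMod 2) E]

/-- The coset `p + V` as a set. -/
def cst (p : E) (V : Submodule (ZMod 2) E) : Set E := {x | x - p ∈ V}

lemma mem_cst_self (p : E) (V : Submodule (ZMod 2) E) : p ∈ cst p V := by
  simp [cst]

lemma cst_nonempty (p : E) (V : Submodule (ZMod 2) E) : (cst p V).Nonempty :=
  ⟨p, mem_cst_self p V⟩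

lemma cst_rebase {p q : E} {V : Submodule (ZMod 2) E} (h : q ∈ cst p V) :
    cst p V = cst q V := by
  have hq : q - p ∈ V := h
  ext x
  simp only [cst, Set.mem_setOf_eq]
  constructor
  · intro hx
    have : x - q = (x - p) - (q - p) := by abel
    rw [this]; exact sub_mem hx hq
  · intro hx
    have : x - p = (x - q) + (q - p) := by abel
    rw [this]; exact add_mem hx hq

lemma cst_mono {p : E} {V V' : Submodule (ZMod 2) E} (h : V ≤ V') : cst p V ⊆ cst p V' :=
  fun _ hx => h hx

lemma add_mem_cst {p : E} {V : Submodule (ZMod 2) E} {v : E} (hv : v ∈ V) :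
    p + v ∈ cst p V := by
  simpa [cst] using hv

lemma dir_le_of_subset {p q : E} {V W : Submodule (ZMod 2) E}
    (h : cst p V ⊆ cst q W) : V ≤ W := by
  intro v hv
  have hp : p ∈ cst q W := h (mem_cst_self p V)
  have hpv : p + v ∈ cst q W := h (add_mem_cst hv)
  rw [cst_rebase hp] at hpv
  simpa [cst] using hpv

lemma cst_inter {p p' q : E} {V V' : Submodule (ZMod 2) E}
    (hq : q ∈ cst p V ∩ cst p' V') :
    cst p V ∩ cst p' V' = cst q (V ⊓ V') := by
  rw [cst_rebase hq.1, cst_rebase hq.2]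
  ext x
  simp only [cst, Set.mem_inter_iff, Set.mem_setOf_eq, Submodule.mem_inf]

/-- A point of a nonempty set, by choice. -/
noncomputable def pick (s : Set E) : E := by
  classical exact if h : s.Nonempty then h.choose else 0

lemma pick_mem {s : Set E} (h : s.Nonempty) : pick s ∈ s := by
  classical
  rw [pick]
  simp only [dif_pos h]
  exact h.choose_spec

/-- The main statement: every partition of a coset of `W` into cosets has at least
`finrank W + 1 - finrank (inf of directions)` members. -/
abbrev MStmt (E : Type*) [AddCommGroup E] [Module (ZMod 2) E] (N : ℕ) : Prop :=
  ∀ W : Submodule (ZMod 2) E, finrank (ZMod 2) W ≤ N →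
    ∀ (s : E) (F : Finset (E × Submodule (ZMod 2) E)),
      (∀ a ∈ F, ∀ b ∈ F, a ≠ b → Disjoint (cst a.1 a.2) (cst b.1 b.2)) →
      (⋃ a ∈ F, cst a.1 a.2) = cst s W →
      finrank (ZMod 2) W + 1 ≤ F.card + finrank (ZMod 2) ↥(F.inf Prod.snd)

section Lemmas

variable [FiniteDimensional (ZMod 2) E]

lemma piece_subset {F : Finset (E × Submodule (ZMod 2) E)} {s : E}
    {W : Submodule (ZMod 2) E}
    (hun : (⋃ a ∈ F, cst a.1 a.2) = cst s W) {a : E × Submodule (ZMod 2) E}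
    (ha : a ∈ F) : cst a.1 a.2 ⊆ cst s W := by
  rw [← hun]
  exact Set.subset_biUnion_of_mem (u := fun a => cst a.1 a.2) ha

lemma exists_piece {F : Finset (E × Submodule (ZMod 2) E)} {s : E}
    {W : Submodule (ZMod 2) E}
    (hun : (⋃ a ∈ F, cst a.1 a.2) = cst s W) {x : E} (hx : x ∈ cst s W) :
    ∃ a ∈ F, x ∈ cst a.1 a.2 := by
  rw [← hun] at hx
  simpa using hx

-- The key auxiliary lemma L': if `Z` is a subspace of `W` not contained in the
-- intersection of all directions of a partition of a coset of `W`, then the number of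
-- members whose direction does not contain `Z` is at least `1 + finrank Z - finrank (Z ⊓ inf)`.
open Classical in
lemma lprime (N : ℕ) (hM : MStmt E N) :
    ∀ r : ℕ, ∀ Z : Submodule (ZMod 2) E, finrank (ZMod 2) Z ≤ r →
      finrank (ZMod 2) Z ≤ N →
      ∀ (W : Submodule (ZMod 2) E) (s : E) (F : Finset (E × Submodule (ZMod 2) E)),
        (∀ a ∈ F, ∀ b ∈ F, a ≠ b → Disjoint (cst a.1 a.2) (cst b.1 b.2)) →
        (⋃ a ∈ F, cst a.1 a.2) = cst s W →
        Z ≤ W → ¬ Z ≤ F.inf Prod.snd →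
        finrank (ZMod 2) Z + 1 ≤
          (F.filter (fun a => ¬ Z ≤ a.2)).card +
            finrank (ZMod 2) ↥(Z ⊓ F.inf Prod.snd) := by
  classical
  intro r
  induction r with
  | zero =>
    intro Z hr _ W s F _ _ _ hZ
    exfalso
    have : Z = ⊥ := Submodule.finrank_eq_zero.mp (Nat.le_zero.mp hr)
    exact hZ (this ▸ bot_le)
  | succ r ih =>
    intro Z hr hN W s F hdisj hun hZW hZ
    -- find a member whose direction does not contain Z
    have hex : ∃ a ∈ F, ¬ Z ≤ a.2 := by
      by_contra h
      push_neg at h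
      exact hZ (Finset.le_inf fun a ha => h a ha)
    obtain ⟨a0, ha0F, ha0⟩ := hex
    set b0 := a0.1 with hb0
    have hb0mem : b0 ∈ cst a0.1 a0.2 := mem_cst_self _ _
    have hb0S : b0 ∈ cst s W := piece_subset hun ha0F hb0mem
    -- the coset D = b0 + Z
    set D : Set E := cst b0 Z with hD
    have hDS : D ⊆ cst s W := by
      intro x hx
      have h1 : x - b0 ∈ W := hZW hx
      have h2 : b0 - s ∈ W := hb0S
      have : x - s = (x - b0) + (b0 - s) := by abel
      exact (by rw [cst, Set.mem_setOf_eq, this]; exact add_mem h1 h2 : x ∈ cst s W)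
    -- members meeting D
    set G : Finset (E × Submodule (ZMod 2) E) :=
      F.filter (fun a => (cst a.1 a.2 ∩ D).Nonempty) with hG
    -- every member meeting D has direction not containing Z
    have hGsmall : ∀ a ∈ G, ¬ Z ≤ a.2 := by
      intro a haG
      obtain ⟨haF, hane⟩ := Finset.mem_filter.mp haG
      intro hle
      -- then D ⊆ cst a.1 a.2, so b0 ∈ piece a, so a = a0, contradiction
      obtain ⟨q, hq⟩ := hane
      have hDa : D ⊆ cst a.1 a.2 := by
        have h1 : cst a.1 a.2 = cst q a.2 := cst_rebase hq.1
        have h2 : D = cst q Z := cst_rebase hq.2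
        rw [h1, h2]
        exact cst_mono hle
      have hb0a : b0 ∈ cst a.1 a.2 := hDa (mem_cst_self _ _)
      by_cases haa0 : a = a0
      · exact ha0 (haa0 ▸ hle)
      · exact Set.disjoint_left.mp (hdisj a haF a0 ha0F haa0) hb0a hb0mem
    have ha0G : a0 ∈ G := by
      rw [hG, Finset.mem_filter]
      exact ⟨ha0F, ⟨b0, hb0mem, mem_cst_self _ _⟩⟩
    -- build the partition of D
    set g : E × Submodule (ZMod 2) E → E × Submodule (ZMod 2) E :=
      fun a => (pick (cst a.1 a.2 ∩ D), a.2 ⊓ Z) with hg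
    have hgset : ∀ a ∈ G, cst (g a).1 (g a).2 = cst a.1 a.2 ∩ D := by
      intro a haG
      obtain ⟨haF, hane⟩ := Finset.mem_filter.mp haG
      exact (cst_inter (pick_mem hane)).symm
    set FD : Finset (E × Submodule (ZMod 2) E) := G.image g with hFD
    have hinjG : Set.InjOn g G := by
      intro a haG b hbG hab
      by_contra hne
      have h1 := hgset a haG
      have h2 := hgset b hbG
      have hdisj' := hdisj a (Finset.mem_filter.mp haG).1 b (Finset.mem_filter.mp hbG).1 hne
      obtain ⟨q, hq⟩ := (Finset.mem_filter.mp haG).2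
      have hq2 : q ∈ cst b.1 b.2 ∩ D := by rw [← h2, ← hab, h1]; exact hq
      exact Set.disjoint_left.mp hdisj' hq.1 hq2.1
    have hFDcard : FD.card = G.card := Finset.card_image_of_injOn hinjG
    have hFDdisj : ∀ a ∈ FD, ∀ b ∈ FD, a ≠ b → Disjoint (cst a.1 a.2) (cst b.1 b.2) := by
      intro a haFD b hbFD hab
      obtain ⟨a', ha'G, rfl⟩ := Finset.mem_image.mp haFD
      obtain ⟨b', hb'G, rfl⟩ := Finset.mem_image.mp hbFD
      have hne' : a' ≠ b' := fun h => hab (h ▸ rfl)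
      rw [hgset a' ha'G, hgset b' hb'G]
      exact Set.disjoint_left.mpr fun x hx hx' =>
        Set.disjoint_left.mp
          (hdisj a' (Finset.mem_filter.mp ha'G).1 b' (Finset.mem_filter.mp hb'G).1 hne')
          hx.1 hx'.1
    have hFDun : (⋃ a ∈ FD, cst a.1 a.2) = cst b0 Z := by
      apply Set.eq_of_subset_of_subset
      · intro x hx
        simp only [Set.mem_iUnion] at hx
        obtain ⟨a, ha, hxa⟩ := hx
        obtain ⟨a', ha'G, rfl⟩ := Finset.mem_image.mp ha
        rw [hgset a' ha'G] at hxa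
        exact hxa.2
      · intro x hx
        obtain ⟨a, haF, hxa⟩ := exists_piece hun (hDS hx)
        have haG : a ∈ G := Finset.mem_filter.mpr ⟨haF, ⟨x, hxa, hx⟩⟩
        simp only [Set.mem_iUnion]
        exact ⟨g a, Finset.mem_image_of_mem g haG, by rw [hgset a haG]; exact ⟨hxa, hx⟩⟩
    -- apply the main statement to FD
    have hMain := hM Z hN b0 FD hFDdisj hFDun
    set W0 : Submodule (ZMod 2) E := FD.inf Prod.snd with hW0
    have hW0eq : W0 = G.inf (fun a => a.2 ⊓ Z) := by
      rw [hW0, hFD, Finset.inf_image]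
      rfl
    have hW0Z : W0 ≤ Z := by
      rw [hW0eq]
      exact le_trans (Finset.inf_le ha0G) inf_le_right
    have hW0a0 : W0 ≤ a0.2 := by
      rw [hW0eq]
      exact le_trans (Finset.inf_le ha0G) inf_le_left
    have hW0ltZ : W0 < Z := lt_of_le_of_ne hW0Z (fun h => ha0 (h ▸ hW0a0))
    have hfrW0 : finrank (ZMod 2) W0 < finrank (ZMod 2) Z :=
      Submodule.finrank_lt_finrank_of_lt hW0ltZ
    -- the inf relation: Z ⊓ F.inf snd = W0 ⊓ F.inf snd
    have hZinfleW0 : Z ⊓ F.inf Prod.snd ≤ W0 := by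
      rw [hW0eq]
      apply Finset.le_inf
      intro a haG
      exact le_inf (le_trans inf_le_right (Finset.inf_le (Finset.mem_filter.mp haG).1))
        inf_le_left
    have hinfeq : W0 ⊓ F.inf Prod.snd = Z ⊓ F.inf Prod.snd := by
      apply le_antisymm
      · exact le_inf (le_trans inf_le_left hW0Z) inf_le_right
      · exact le_inf hZinfleW0 inf_le_right
    -- G members all have ¬ Z ≤ a.2; also every "W0-small" member is "Z-small"
    have hGsub : G ⊆ F.filter (fun a => ¬ Z ≤ a.2) := by
      intro a haG
      exact Finset.mem_filter.mpr ⟨(Finset.mem_filter.mp haG).1, hGsmall a haG⟩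
    by_cases hW0small : W0 ≤ F.inf Prod.snd
    · -- then W0 = Z ⊓ F.inf snd
      have h1 : W0 ≤ Z ⊓ F.inf Prod.snd := le_inf hW0Z hW0small
      have h2 : finrank (ZMod 2) W0 ≤ finrank (ZMod 2) ↥(Z ⊓ F.inf Prod.snd) :=
        Submodule.finrank_mono h1
      have h3 : G.card ≤ (F.filter (fun a => ¬ Z ≤ a.2)).card :=
        Finset.card_le_card hGsub
      omega
    · -- recurse with W0
      have hrec := ih W0 (by omega) (by omega) W s F hdisj hun (le_trans hW0Z hZW) hW0small
      rw [hinfeq] at hrec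
      -- disjointness of G and the W0-small filter
      have hdisjGW : ∀ a ∈ G, W0 ≤ a.2 := by
        intro a haG
        rw [hW0eq]
        exact le_trans (Finset.inf_le haG) inf_le_left
      have hsub2 : F.filter (fun a => ¬ W0 ≤ a.2) ⊆ F.filter (fun a => ¬ Z ≤ a.2) := by
        intro a ha
        obtain ⟨haF, h⟩ := Finset.mem_filter.mp ha
        exact Finset.mem_filter.mpr ⟨haF, fun hle => h (le_trans hW0Z hle)⟩
      have hdisj2 : Disjoint G (F.filter (fun a => ¬ W0 ≤ a.2)) := by
        rw [Finset.disjoint_left]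
        intro a haG ha2
        exact (Finset.mem_filter.mp ha2).2 (hdisjGW a haG)
      have hcard : G.card + (F.filter (fun a => ¬ W0 ≤ a.2)).card ≤
          (F.filter (fun a => ¬ Z ≤ a.2)).card := by
        rw [← Finset.card_union_of_disjoint hdisj2]
        exact Finset.card_le_card (Finset.union_subset hGsub hsub2)
      omega

/-- The main theorem, by induction on the dimension. -/
lemma mthm : ∀ N : ℕ, MStmt E N := by
  classical
  intro N
  induction N with
  | zero =>
    intro W _ s F _ hun
    have hs : s ∈ cst s W := mem_cst_self s W
    obtain ⟨a, haF, _⟩ := exists_piece hun hs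
    have : 1 ≤ F.card := Finset.card_pos.mpr ⟨a, haF⟩
    have hW : finrank (ZMod 2) W = 0 := by omega
    omega
  | succ N ihM =>
    intro W hWN s F hdisj hun
    have hFne : F.Nonempty := by
      obtain ⟨a, haF, _⟩ := exists_piece hun (mem_cst_self s W)
      exact ⟨a, haF⟩
    -- directions of members are ≤ W
    have hdirle : ∀ a ∈ F, a.2 ≤ W := by
      intro a haF
      have := piece_subset hun haF
      have h2 : cst s W = cst a.1 W := cst_rebase (this (mem_cst_self _ _))
      exact dir_le_of_subset (h2 ▸ this)
    by_cases hex : ∃ a ∈ F, ¬ W ≤ a.2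
    swap
    · -- all directions equal W; then inf = W
      push_neg at hex
      have hinf : W ≤ F.inf Prod.snd := Finset.le_inf fun a ha => hex a ha
      have : finrank (ZMod 2) W ≤ finrank (ZMod 2) ↥(F.inf Prod.snd) :=
        Submodule.finrank_mono hinf
      have : 1 ≤ F.card := Finset.card_pos.mpr hFne
      omega
    obtain ⟨astar, hastarF, hastar⟩ := hex
    set Vs := astar.2 with hVs
    set ps := astar.1 with hps
    have hVsW : Vs ≤ W := hdirle astar hastarF
    obtain ⟨w0, hw0W, hw0Vs⟩ : ∃ w0 ∈ W, w0 ∉ Vs := by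
      by_contra h
      push_neg at h
      exact hastar h
    -- a functional vanishing on Vs with value 1 on w0
    obtain ⟨φ, hφw0, hφVs⟩ := Submodule.exists_dual_map_eq_bot_of_notMem hw0Vs inferInstance
    have hφw0' : φ w0 = 1 := by
      have : ∀ c : ZMod 2, c ≠ 0 → c = 1 := by decide
      exact this _ hφw0
    have hφVs' : ∀ v ∈ Vs, φ v = 0 := by
      intro v hv
      have : φ v ∈ Vs.map φ := Submodule.mem_map_of_mem hv
      rw [hφVs] at this
      exact (Submodule.mem_bot (ZMod 2)).mp this
    set H : Submodule (ZMod 2) E := (LinearMap.ker φ) ⊓ W with hH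
    have hVsH : Vs ≤ H := le_inf (fun v hv => hφVs' v hv) hVsW
    have hHW : H ≤ W := inf_le_right
    have hw0H : w0 ∉ H := by
      intro h
      have : φ w0 = 0 := h.1
      rw [hφw0'] at this
      exact one_ne_zero this
    have hw0ne : w0 ≠ 0 := fun h => hw0Vs (h ▸ Vs.zero_mem)
    -- finrank H + 1 = finrank W
    have hfrHW : finrank (ZMod 2) H + 1 = finrank (ZMod 2) W := by
      have hlt : H < W := lt_of_le_of_ne hHW (fun h => hw0H (h ▸ hw0W))
      have h1 : finrank (ZMod 2) H < finrank (ZMod 2) W :=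
        Submodule.finrank_lt_finrank_of_lt hlt
      have h2 : W ≤ H ⊔ Submodule.span (ZMod 2) {w0} := by
        intro x hxW
        rcases (by decide : ∀ c : ZMod 2, c = 0 ∨ c = 1) (φ x) with hc | hc
        · exact Submodule.mem_sup_left (Submodule.mem_inf.mpr ⟨hc, hxW⟩)
        · have hx' : x - w0 ∈ H := by
            refine Submodule.mem_inf.mpr ⟨?_, sub_mem hxW hw0W⟩
            simp [LinearMap.mem_ker, map_sub, hc, hφw0']
          have : x = (x - w0) + w0 := by abel
          rw [this]
          exact Submodule.add_mem _ (Submodule.mem_sup_left hx')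
            (Submodule.mem_sup_right (Submodule.mem_span_singleton_self w0))
      have h3 : finrank (ZMod 2) W ≤
          finrank (ZMod 2) H + finrank (ZMod 2) (Submodule.span (ZMod 2) {w0}) := by
        calc finrank (ZMod 2) W ≤ finrank (ZMod 2) ↥(H ⊔ Submodule.span (ZMod 2) {w0}) :=
              Submodule.finrank_mono h2
          _ ≤ _ := by
              have := Submodule.finrank_sup_add_finrank_inf_eq H (Submodule.span (ZMod 2) {w0})
              omega
      rw [finrank_span_singleton hw0ne] at h3
      omega
    have hfrHN : finrank (ZMod 2) H ≤ N := by omega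
    -- the two sides
    set side1 : Set E := cst (ps + w0) H with hside1
    set side2 : Set E := cst ps H with hside2
    have hpsS : ps ∈ cst s W := piece_subset hun hastarF (mem_cst_self _ _)
    have hSdecomp : ∀ x ∈ cst s W, x ∈ side1 ∨ x ∈ side2 := by
      intro x hx
      have hxps : x - ps ∈ W := by
        have h2 : cst s W = cst ps W := cst_rebase hpsS
        rw [h2] at hx
        exact hx
      rcases (by decide : ∀ c : ZMod 2, c = 0 ∨ c = 1) (φ (x - ps)) with hc | hc
      · exact Or.inr (Submodule.mem_inf.mpr ⟨hc, hxps⟩)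
      · left
        have : x - (ps + w0) = (x - ps) - w0 := by abel
        refine Submodule.mem_inf.mpr ⟨?_, ?_⟩
        · rw [this]; simp [LinearMap.mem_ker, map_sub, hc, hφw0']
        · rw [this]; exact sub_mem hxps hw0W
    have hside1S : side1 ⊆ cst s W := by
      intro x hx
      have h2 : cst s W = cst ps W := cst_rebase hpsS
      rw [h2]
      have h3 : x - (ps + w0) ∈ W := hHW hx
      have : x - ps = (x - (ps + w0)) + w0 := by abel
      rw [cst, Set.mem_setOf_eq, this]
      exact add_mem h3 hw0W
    have hside2S : side2 ⊆ cst s W := by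
      intro x hx
      have h2 : cst s W = cst ps W := cst_rebase hpsS
      rw [h2]
      exact cst_mono hHW hx
    have hsidesdisj : side1 ∩ side2 = ∅ := by
      rw [Set.eq_empty_iff_forall_notMem]
      rintro x ⟨h1, h2⟩
      apply hw0H
      have ha : x - (ps + w0) ∈ H := h1
      have hb : x - ps ∈ H := h2
      have : w0 = (x - ps) - (x - (ps + w0)) := by abel
      rw [this]
      exact sub_mem hb ha
    -- filters
    set meets1 : E × Submodule (ZMod 2) E → Prop :=
      fun a => (cst a.1 a.2 ∩ side1).Nonempty with hmeets1
    set meets2 : E × Submodule (ZMod 2) E → Prop :=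
      fun a => (cst a.1 a.2 ∩ side2).Nonempty with hmeets2
    set Fc : Finset (E × Submodule (ZMod 2) E) := F.filter meets1 with hFc
    set Ff : Finset (E × Submodule (ZMod 2) E) := F.filter (fun a => ¬ meets1 a) with hFf
    have hFcFf : Fc.card + Ff.card = F.card := Finset.card_filter_add_card_filter_not _
    -- members not meeting side1 lie in side2 and their directions are ≤ H
    have hflat : ∀ a ∈ Ff, cst a.1 a.2 ⊆ side2 := by
      intro a haFf
      obtain ⟨haF, hnm⟩ := Finset.mem_filter.mp haFf
      intro x hx
      rcases hSdecomp x (piece_subset hun haF hx) with h | h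
      · exact absurd ⟨x, hx, h⟩ hnm
      · exact h
    have hflatdir : ∀ a ∈ Ff, a.2 ≤ H := by
      intro a haFf
      have h1 := hflat a haFf
      have h2 : side2 = cst a.1 H := cst_rebase (h1 (mem_cst_self _ _))
      exact dir_le_of_subset (h2 ▸ h1)
    -- astar is in Ff
    have hastarFf : astar ∈ Ff := by
      refine Finset.mem_filter.mpr ⟨hastarF, ?_⟩
      rintro ⟨x, hx1, hx2⟩
      have : x ∈ side2 := cst_mono hVsH hx1
      rw [Set.eq_empty_iff_forall_notMem] at hsidesdisj
      exact hsidesdisj x ⟨hx2, this⟩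
    -- partition of side1
    set g1 : E × Submodule (ZMod 2) E → E × Submodule (ZMod 2) E :=
      fun a => (pick (cst a.1 a.2 ∩ side1), a.2 ⊓ H) with hg1
    have hg1set : ∀ a ∈ Fc, cst (g1 a).1 (g1 a).2 = cst a.1 a.2 ∩ side1 := by
      intro a haFc
      exact (cst_inter (pick_mem (Finset.mem_filter.mp haFc).2)).symm
    set F1 : Finset (E × Submodule (ZMod 2) E) := Fc.image g1 with hF1
    have hinj1 : Set.InjOn g1 Fc := by
      intro a haG b hbG hab
      by_contra hne
      have h1 := hg1set a haG
      have h2 := hg1set b hbG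
      have hdisj' := hdisj a (Finset.mem_filter.mp haG).1 b (Finset.mem_filter.mp hbG).1 hne
      have hnea : (cst a.1 a.2 ∩ side1).Nonempty := (Finset.mem_filter.mp haG).2
      obtain ⟨q, hq⟩ := hnea
      have hq2 : q ∈ cst b.1 b.2 ∩ side1 := by rw [← h2, ← hab, h1]; exact hq
      exact Set.disjoint_left.mp hdisj' hq.1 hq2.1
    have hF1card : F1.card = Fc.card := Finset.card_image_of_injOn hinj1
    have hF1disj : ∀ a ∈ F1, ∀ b ∈ F1, a ≠ b → Disjoint (cst a.1 a.2) (cst b.1 b.2) := by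
      intro a haF1 b hbF1 hab
      obtain ⟨a', ha'G, rfl⟩ := Finset.mem_image.mp haF1
      obtain ⟨b', hb'G, rfl⟩ := Finset.mem_image.mp hbF1
      have hne' : a' ≠ b' := fun h => hab (h ▸ rfl)
      rw [hg1set a' ha'G, hg1set b' hb'G]
      exact Set.disjoint_left.mpr fun x hx hx' =>
        Set.disjoint_left.mp
          (hdisj a' (Finset.mem_filter.mp ha'G).1 b' (Finset.mem_filter.mp hb'G).1 hne')
          hx.1 hx'.1
    have hF1un : (⋃ a ∈ F1, cst a.1 a.2) = cst (ps + w0) H := by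
      apply Set.eq_of_subset_of_subset
      · intro x hx
        simp only [Set.mem_iUnion] at hx
        obtain ⟨a, ha, hxa⟩ := hx
        obtain ⟨a', ha'G, rfl⟩ := Finset.mem_image.mp ha
        rw [hg1set a' ha'G] at hxa
        exact hxa.2
      · intro x hx
        obtain ⟨a, haF, hxa⟩ := exists_piece hun (hside1S hx)
        have haG : a ∈ Fc := Finset.mem_filter.mpr ⟨haF, ⟨x, hxa, hx⟩⟩
        simp only [Set.mem_iUnion]
        exact ⟨g1 a, Finset.mem_image_of_mem g1 haG, by rw [hg1set a haG]; exact ⟨hxa, hx⟩⟩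
    have hIH1 := ihM H hfrHN (ps + w0) F1 hF1disj hF1un
    set U1 : Submodule (ZMod 2) E := F1.inf Prod.snd with hU1
    have hU1eq : U1 = Fc.inf (fun a => a.2 ⊓ H) := by
      rw [hU1, hF1, Finset.inf_image]
      rfl
    have hFcne : Fc.Nonempty := by
      obtain ⟨a, haF, hxa⟩ := exists_piece hun (hside1S (mem_cst_self (ps + w0) H))
      exact ⟨a, Finset.mem_filter.mpr ⟨haF, ⟨ps + w0, hxa, mem_cst_self _ _⟩⟩⟩
    have hU1H : U1 ≤ H := by
      obtain ⟨a, haFc⟩ := hFcne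
      rw [hU1eq]
      exact le_trans (Finset.inf_le haFc) inf_le_right
    have hfrU1 : finrank (ZMod 2) U1 ≤ N := le_trans (Submodule.finrank_mono hU1H) hfrHN
    -- partition of side2
    set P2 : Finset (E × Submodule (ZMod 2) E) := F.filter meets2 with hP2
    set g2 : E × Submodule (ZMod 2) E → E × Submodule (ZMod 2) E :=
      fun a => (pick (cst a.1 a.2 ∩ side2), a.2 ⊓ H) with hg2
    have hg2set : ∀ a ∈ P2, cst (g2 a).1 (g2 a).2 = cst a.1 a.2 ∩ side2 := by
      intro a haP2
      exact (cst_inter (pick_mem (Finset.mem_filter.mp haP2).2)).symm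
    set F2 : Finset (E × Submodule (ZMod 2) E) := P2.image g2 with hF2
    have hinj2 : Set.InjOn g2 P2 := by
      intro a haG b hbG hab
      by_contra hne
      have h1 := hg2set a haG
      have h2 := hg2set b hbG
      have hdisj' := hdisj a (Finset.mem_filter.mp haG).1 b (Finset.mem_filter.mp hbG).1 hne
      obtain ⟨q, hq⟩ := (Finset.mem_filter.mp haG).2
      have hq2 : q ∈ cst b.1 b.2 ∩ side2 := by rw [← h2, ← hab, h1]; exact hq
      exact Set.disjoint_left.mp hdisj' hq.1 hq2.1
    have hF2disj : ∀ a ∈ F2, ∀ b ∈ F2, a ≠ b → Disjoint (cst a.1 a.2) (cst b.1 b.2) := by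
      intro a haF2 b hbF2 hab
      obtain ⟨a', ha'G, rfl⟩ := Finset.mem_image.mp haF2
      obtain ⟨b', hb'G, rfl⟩ := Finset.mem_image.mp hbF2
      have hne' : a' ≠ b' := fun h => hab (h ▸ rfl)
      rw [hg2set a' ha'G, hg2set b' hb'G]
      exact Set.disjoint_left.mpr fun x hx hx' =>
        Set.disjoint_left.mp
          (hdisj a' (Finset.mem_filter.mp ha'G).1 b' (Finset.mem_filter.mp hb'G).1 hne')
          hx.1 hx'.1
    have hF2un : (⋃ a ∈ F2, cst a.1 a.2) = cst ps H := by
      apply Set.eq_of_subset_of_subset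
      · intro x hx
        simp only [Set.mem_iUnion] at hx
        obtain ⟨a, ha, hxa⟩ := hx
        obtain ⟨a', ha'G, rfl⟩ := Finset.mem_image.mp ha
        rw [hg2set a' ha'G] at hxa
        exact hxa.2
      · intro x hx
        obtain ⟨a, haF, hxa⟩ := exists_piece hun (hside2S hx)
        have haG : a ∈ P2 := Finset.mem_filter.mpr ⟨haF, ⟨x, hxa, hx⟩⟩
        simp only [Set.mem_iUnion]
        exact ⟨g2 a, Finset.mem_image_of_mem g2 haG, by rw [hg2set a haG]; exact ⟨hxa, hx⟩⟩
    -- the intersection identity: U1 ⊓ F2.inf snd = F.inf snd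
    have hU : F.inf Prod.snd ≤ Vs := Finset.inf_le hastarF
    have hUH : F.inf Prod.snd ≤ H := le_trans hU hVsH
    have hmeets : ∀ a ∈ F, meets1 a ∨ meets2 a := by
      intro a haF
      have : a.1 ∈ cst s W := piece_subset hun haF (mem_cst_self _ _)
      rcases hSdecomp a.1 this with h | h
      · exact Or.inl ⟨a.1, mem_cst_self _ _, h⟩
      · exact Or.inr ⟨a.1, mem_cst_self _ _, h⟩
    have hF2inf : F2.inf Prod.snd = P2.inf (fun a => a.2 ⊓ H) := by
      rw [hF2, Finset.inf_image]
      rfl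
    have hinfid : U1 ⊓ F2.inf Prod.snd = F.inf Prod.snd := by
      rw [hU1eq, hF2inf]
      apply le_antisymm
      · apply Finset.le_inf
        intro a haF
        rcases hmeets a haF with h | h
        · exact le_trans inf_le_left
            (le_trans (Finset.inf_le (Finset.mem_filter.mpr ⟨haF, h⟩)) inf_le_left)
        · exact le_trans inf_le_right
            (le_trans (Finset.inf_le (Finset.mem_filter.mpr ⟨haF, h⟩)) inf_le_left)
      · apply le_inf
        · apply Finset.le_inf
          intro a haFc
          exact le_inf (Finset.inf_le (Finset.mem_filter.mp haFc).1) hUH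
        · apply Finset.le_inf
          intro a haP2
          exact le_inf (Finset.inf_le (Finset.mem_filter.mp haP2).1) hUH
    -- count: number of "U1-small" members of F2 is at most Ff.card
    have hsmallsub : P2.filter (fun a => ¬ U1 ≤ (g2 a).2) ⊆ Ff := by
      intro a ha
      obtain ⟨haP2, hsmall⟩ := Finset.mem_filter.mp ha
      have haF := (Finset.mem_filter.mp haP2).1
      refine Finset.mem_filter.mpr ⟨haF, ?_⟩
      intro hm1
      apply hsmall
      have : a ∈ Fc := Finset.mem_filter.mpr ⟨haF, hm1⟩
      rw [hU1eq]
      exact Finset.inf_le this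
    have hF2filter : (F2.filter (fun b => ¬ U1 ≤ b.2)).card ≤ Ff.card := by
      have himg : F2.filter (fun b => ¬ U1 ≤ b.2) =
          (P2.filter (fun a => ¬ U1 ≤ (g2 a).2)).image g2 := by
        rw [hF2]
        rw [Finset.filter_image]
      rw [himg]
      calc ((P2.filter (fun a => ¬ U1 ≤ (g2 a).2)).image g2).card
          ≤ (P2.filter (fun a => ¬ U1 ≤ (g2 a).2)).card := Finset.card_image_le
        _ ≤ Ff.card := Finset.card_le_card hsmallsub
    -- now combine
    by_cases hk : U1 ≤ F2.inf Prod.snd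
    · -- U1 ≤ F.inf snd
      have h1 : U1 ≤ F.inf Prod.snd := by
        rw [← hinfid]
        exact le_inf le_rfl hk
      have h2 : finrank (ZMod 2) U1 ≤ finrank (ZMod 2) ↥(F.inf Prod.snd) :=
        Submodule.finrank_mono h1
      have h3 : 1 ≤ Ff.card := Finset.card_pos.mpr ⟨astar, hastarFf⟩
      rw [hF1card] at hIH1
      omega
    · have hLp := lprime N ihM (finrank (ZMod 2) U1) U1 le_rfl hfrU1 H ps F2 hF2disj
        hF2un hU1H hk
      rw [hinfid] at hLp
      rw [hF1card] at hIH1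
      omega

end Lemmas

end TightAVSP

open TightAVSP in
/-- Every tight affine vector space partition of `F₂^n` (`n ≥ 1`),
i.e., a partition of `F₂^n` into (nonempty) affine subspaces the intersection of whose
directions is the zero subspace, has size at least `n + 1`. -/
theorem tight_avsp_lower_bound (n : ℕ) (hn : 1 ≤ n)
    (F : Finset (AffineSubspace (ZMod 2) (Fin n → ZMod 2)))
    (hne : ∀ A ∈ F, (A : Set (Fin n → ZMod 2)).Nonempty)
    (hdisj : ∀ A ∈ F, ∀ B ∈ F, A ≠ B →
      Disjoint (A : Set (Fin n → ZMod 2)) (B : Set (Fin n → ZMod 2)))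
    (hcover : (⋃ A ∈ F, (A : Set (Fin n → ZMod 2))) = Set.univ)
    (htight : (⨅ A ∈ F, AffineSubspace.direction A) = ⊥) :
    n + 1 ≤ F.card := by
  classical
  set E := Fin n → ZMod 2
  -- convert each affine subspace to a pair (point, direction)
  set f : AffineSubspace (ZMod 2) E → E × Submodule (ZMod 2) E :=
    fun A => (pick (A : Set E), A.direction) with hf
  have hset : ∀ A ∈ F, (A : Set E) = cst (f A).1 (f A).2 := by
    intro A hA
    have hp : pick (A : Set E) ∈ A := pick_mem (hne A hA)
    ext x
    rw [cst, Set.mem_setOf_eq]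
    have := AffineSubspace.vsub_right_mem_direction_iff_mem hp x
    rw [vsub_eq_sub] at this
    rw [SetLike.mem_coe, ← this]
  set F' : Finset (E × Submodule (ZMod 2) E) := F.image f with hF'
  have hinj : Set.InjOn f F := by
    intro A hA B hB hAB
    have h1 : (A : Set E) = (B : Set E) := by
      rw [hset A hA, hset B hB, hAB]
    exact SetLike.coe_injective h1
  have hcard : F'.card = F.card := Finset.card_image_of_injOn hinj
  have hdisj' : ∀ a ∈ F', ∀ b ∈ F', a ≠ b → Disjoint (cst a.1 a.2) (cst b.1 b.2) := by
    intro a haF' b hbF' hab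
    obtain ⟨A, hA, rfl⟩ := Finset.mem_image.mp haF'
    obtain ⟨B, hB, rfl⟩ := Finset.mem_image.mp hbF'
    have hne' : A ≠ B := fun h => hab (h ▸ rfl)
    rw [← hset A hA, ← hset B hB]
    exact hdisj A hA B hB hne'
  have hun' : (⋃ a ∈ F', cst a.1 a.2) = cst 0 (⊤ : Submodule (ZMod 2) E) := by
    have htop : cst (0 : E) (⊤ : Submodule (ZMod 2) E) = Set.univ := by
      ext x; simp [cst]
    rw [htop, ← hcover]
    apply Set.eq_of_subset_of_subset
    · intro x hx
      simp only [Set.mem_iUnion] at hx ⊢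
      obtain ⟨a, ha, hxa⟩ := hx
      obtain ⟨A, hA, rfl⟩ := Finset.mem_image.mp ha
      exact ⟨A, hA, by rw [hset A hA]; exact hxa⟩
    · intro x hx
      simp only [Set.mem_iUnion] at hx ⊢
      obtain ⟨A, hA, hxA⟩ := hx
      exact ⟨f A, Finset.mem_image_of_mem f hA, by rw [← hset A hA]; exact hxA⟩
  have hinf : F'.inf Prod.snd = ⊥ := by
    rw [hF', Finset.inf_image]
    have : F.inf (Prod.snd ∘ f) = F.inf AffineSubspace.direction := rfl
    rw [this, Finset.inf_eq_iInf, htight]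
  have hfr : finrank (ZMod 2) (⊤ : Submodule (ZMod 2) E) = n := by
    rw [finrank_top]
    simp [E]
  have := mthm (E := E) n ⊤ (by rw [hfr]) 0 F' hdisj' hun'
  rw [hinf, hfr, hcard] at this
  simpa using this
end

section
/- Let F be a subcube partition of {0,1}^n. Define G = { *t** : t* ∈ F } ∪ { 0tb*, 1t*b : b ∈ {0,1}, tb ∈ F } (each word obtained from a word of F by prepending one symbol and appending two). Then G is a subcube partition of {0,1}^{n+2}; if F is tight then G is tight; and if F is irreducible and contains a subcube whose last symbol is *, then G is irreducible and contains a subcube ending with *. -/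
/-- The subcubes of length `n+3` a subcube `s` of length `n+1` expands to:
`t* ∈ F` yields `*t**`, and `tb ∈ F` (with `b ∈ {0,1}`) yields `0tb*` and `1t*b`. -/
def starExpandOne {n : ℕ} (s : Subcube (n + 1)) : Finset (Subcube (n + 3)) :=
  match s (Fin.last n) with
  | none => {Fin.cons (none : Option Bool) (Fin.snoc s none)}
  | some b =>
      {Fin.cons (some false) (Fin.snoc (Function.update s (Fin.last n) (some b)) none),
       Fin.cons (some true) (Fin.snoc (Function.update s (Fin.last n) none) (some b))}

def starExpand {n : ℕ} (F : Finset (Subcube (n + 1))) : Finset (Subcube (n + 3)) :=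
  F.biUnion starExpandOne
namespace StarExpandProof

variable {n : ℕ}

/-- The middle part of a word of length `n+3`. -/
def mid {α : Type*} (x : Fin (n + 3) → α) : Fin (n + 1) → α :=
  fun j => x (Fin.succ (Fin.castSucc j))

def cA (s : Subcube (n + 1)) : Subcube (n + 3) :=
  Fin.cons none (Fin.snoc s none)

def cB (s : Subcube (n + 1)) : Subcube (n + 3) :=
  Fin.cons (some false) (Fin.snoc s none)

def cC (s : Subcube (n + 1)) (b : Bool) : Subcube (n + 3) :=
  Fin.cons (some true) (Fin.snoc (Function.update s (Fin.last n) none) (some b))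

lemma mem_points {m : ℕ} {s : Subcube m} {x : Fin m → Bool} :
    x ∈ s.points ↔ ∀ i b, s i = some b → x i = b := Iff.rfl

lemma cs_zero {α : Type*} (a : α) (y : Fin (n + 1) → α) (c : α) :
    (Fin.cons a (Fin.snoc y c) : Fin (n + 3) → α) 0 = a := rfl

lemma cs_last {α : Type*} (a : α) (y : Fin (n + 1) → α) (c : α) :
    (Fin.cons a (Fin.snoc y c) : Fin (n + 3) → α) (Fin.last (n + 2)) = c := by
  rw [← Fin.succ_last, Fin.cons_succ, Fin.snoc_last]

lemma cs_mid {α : Type*} (a : α) (y : Fin (n + 1) → α) (c : α) (k : Fin (n + 1)) :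
    (Fin.cons a (Fin.snoc y c) : Fin (n + 3) → α) (Fin.succ (Fin.castSucc k)) = y k := by
  rw [Fin.cons_succ, Fin.snoc_castSucc]

lemma mid_cs {α : Type*} (a : α) (y : Fin (n + 1) → α) (c : α) :
    mid (Fin.cons a (Fin.snoc y c) : Fin (n + 3) → α) = y :=
  funext fun j => cs_mid a y c j

lemma eq_cons_snoc {α : Type*} (x : Fin (n + 3) → α) :
    x = Fin.cons (x 0) (Fin.snoc (mid x) (x (Fin.last (n + 2)))) := by
  funext i
  induction i using Fin.cases with
  | zero => rfl
  | succ j =>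
    induction j using Fin.lastCases with
    | last => rw [Fin.succ_last, cs_last]
    | cast k => rw [cs_mid]; rfl

lemma mem_cons_snoc {a c : Option Bool} {s : Subcube (n + 1)} {x : Fin (n + 3) → Bool} :
    x ∈ Subcube.points (Fin.cons a (Fin.snoc s c) : Subcube (n + 3)) ↔
      (∀ b, a = some b → x 0 = b) ∧ mid x ∈ s.points ∧
        (∀ b, c = some b → x (Fin.last (n + 2)) = b) := by
  rw [mem_points]
  constructor
  · intro h
    refine ⟨fun b hb => h 0 b (by rw [cs_zero]; exact hb),
      fun j b hj => h (Fin.succ (Fin.castSucc j)) b (by rw [cs_mid]; exact hj),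
      fun b hb => h (Fin.last (n + 2)) b (by rw [cs_last]; exact hb)⟩
  · rintro ⟨h0, hm, hl⟩ i
    induction i using Fin.cases with
    | zero => intro b hb; rw [cs_zero] at hb; exact h0 b hb
    | succ j =>
      induction j using Fin.lastCases with
      | last => intro b hb; rw [Fin.succ_last] at hb ⊢; rw [cs_last] at hb; exact hl b hb
      | cast k => intro b hb; rw [cs_mid] at hb; exact hm k b hb

lemma points_nonempty {m : ℕ} (s : Subcube m) : ∃ x, x ∈ s.points :=
  ⟨fun i => (s i).getD false, fun i b h => by simp [h]⟩

lemma flip_mem {m : ℕ} {v : Subcube m} {x : Fin m → Bool} (hx : x ∈ v.points)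
    {i : Fin m} (hv : v i = none) (c : Bool) : Function.update x i c ∈ v.points := by
  intro j b hj
  rcases eq_or_ne j i with rfl | hne
  · rw [hv] at hj; simp at hj
  · rw [Function.update_of_ne hne]; exact hx j b hj

lemma none_of_two {m : ℕ} {u : Subcube m} {x y : Fin m → Bool} (hx : x ∈ u.points)
    (hy : y ∈ u.points) {i : Fin m} (h : x i ≠ y i) : u i = none := by
  cases hu : u i with
  | none => rfl
  | some b => exact absurd ((hx i b hu).trans (hy i b hu).symm) h

lemma update_mem_iff {s : Subcube (n + 1)} (hs : s (Fin.last n) = none)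
    {y : Fin (n + 1) → Bool} {c : Bool} :
    Function.update y (Fin.last n) c ∈ s.points ↔ y ∈ s.points := by
  constructor <;> intro h j b hj
  · rcases eq_or_ne j (Fin.last n) with rfl | hne
    · rw [hs] at hj; simp at hj
    · have := h j b hj; rwa [Function.update_of_ne hne] at this
  · rcases eq_or_ne j (Fin.last n) with rfl | hne
    · rw [hs] at hj; simp at hj
    · rw [Function.update_of_ne hne]; exact h j b hj

lemma mem_cA_iff {s : Subcube (n + 1)} {x : Fin (n + 3) → Bool} :
    x ∈ (cA s).points ↔ mid x ∈ s.points := by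
  rw [cA, mem_cons_snoc]
  simp

lemma mem_cB_iff {s : Subcube (n + 1)} {x : Fin (n + 3) → Bool} :
    x ∈ (cB s).points ↔ x 0 = false ∧ mid x ∈ s.points := by
  rw [cB, mem_cons_snoc]
  simp

lemma mem_cC_iff {s : Subcube (n + 1)} {b : Bool} (hs : s (Fin.last n) = some b)
    {x : Fin (n + 3) → Bool} :
    x ∈ (cC s b).points ↔ x 0 = true ∧
      Function.update (mid x) (Fin.last n) (x (Fin.last (n + 2))) ∈ s.points := by
  rw [cC, mem_cons_snoc]
  constructor
  · rintro ⟨h0, hm, hl⟩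
    refine ⟨h0 true rfl, fun j b' hj => ?_⟩
    rcases eq_or_ne j (Fin.last n) with rfl | hne
    · rw [hs] at hj
      have hb' : b' = b := by injection hj.symm
      subst hb'
      rw [Function.update_self]
      exact hl b' rfl
    · rw [Function.update_of_ne hne]
      exact hm j b' (by rw [Function.update_of_ne hne]; exact hj)
  · rintro ⟨h0, hz⟩
    refine ⟨fun b' hb' => by injection hb' with h; rw [← h]; exact h0,
      fun j b' hj => ?_, fun b' hb' => ?_⟩
    · rcases eq_or_ne j (Fin.last n) with rfl | hne
      · rw [Function.update_self] at hj; simp at hj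
      · rw [Function.update_of_ne hne] at hj
        have := hz j b' hj
        rwa [Function.update_of_ne hne] at this
    · have hb : b' = b := by injection hb'.symm
      subst hb
      have := hz (Fin.last n) b' hs
      rwa [Function.update_self] at this

lemma seo_none {s : Subcube (n + 1)} (hs : s (Fin.last n) = none) :
    starExpandOne s = {cA s} := by
  unfold starExpandOne
  rw [hs]
  rfl

lemma seo_some {s : Subcube (n + 1)} {b : Bool} (hs : s (Fin.last n) = some b) :
    starExpandOne s = {cB s, cC s b} := by
  unfold starExpandOne
  rw [hs]
  dsimp only
  rw [show Function.update s (Fin.last n) (some b) = s from by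
    rw [← hs]; exact Function.update_eq_self _ _]
  rfl

lemma mem_starExpand {F : Finset (Subcube (n + 1))} {u : Subcube (n + 3)} :
    u ∈ starExpand F ↔ ∃ s ∈ F, u ∈ starExpandOne s := Finset.mem_biUnion

lemma expand_cases {F : Finset (Subcube (n + 1))} {v : Subcube (n + 3)}
    (h : v ∈ starExpand F) :
    ∃ s ∈ F, (s (Fin.last n) = none ∧ v = cA s) ∨
      ∃ b, s (Fin.last n) = some b ∧ (v = cB s ∨ v = cC s b) := by
  obtain ⟨s, hsF, hvs⟩ := mem_starExpand.1 h
  cases hsl : s (Fin.last n) with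
  | none =>
    rw [seo_none hsl] at hvs
    exact ⟨s, hsF, Or.inl ⟨hsl, Finset.mem_singleton.1 hvs⟩⟩
  | some b =>
    rw [seo_some hsl] at hvs
    rcases Finset.mem_insert.1 hvs with h1 | h2
    · exact ⟨s, hsF, Or.inr ⟨b, hsl, Or.inl h1⟩⟩
    · exact ⟨s, hsF, Or.inr ⟨b, hsl, Or.inr (Finset.mem_singleton.1 h2)⟩⟩

lemma mem_of_points_subset {m : ℕ} {F : Finset (Subcube m)}
    (hdisj : ∀ s ∈ F, ∀ t ∈ F, s ≠ t → Disjoint s.points t.points)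
    {s : Subcube m} (hsF : s ∈ F) {T : Finset (Subcube m)} (hT : T ⊆ F)
    (h : s.points ⊆ ⋃ t ∈ T, Subcube.points t) : s ∈ T := by
  obtain ⟨x, hx⟩ := points_nonempty s
  have hx' := h hx
  simp only [Set.mem_iUnion, exists_prop] at hx'
  obtain ⟨t, ht, hxt⟩ := hx'
  rcases eq_or_ne s t with rfl | hne
  · exact ht
  · exact absurd (hdisj s hsF t (hT ht) hne) (Set.not_disjoint_iff.2 ⟨x, hx, hxt⟩)

lemma mem_points_decomp {u : Subcube (n + 3)} {x : Fin (n + 3) → Bool} :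
    x ∈ u.points ↔ (∀ b, u 0 = some b → x 0 = b) ∧ mid x ∈ Subcube.points (mid u) ∧
      (∀ b, u (Fin.last (n + 2)) = some b → x (Fin.last (n + 2)) = b) := by
  conv_lhs => rw [eq_cons_snoc u]
  exact mem_cons_snoc

end StarExpandProof

open StarExpandProof in
/-- The expansion `G = {*t** : t* ∈ F} ∪ {0tb*, 1t*b : b ∈ {0,1},
tb ∈ F}` of a subcube partition `F` of `{0,1}^(n+1)` is a subcube partition of
`{0,1}^(n+3)`; it is tight whenever `F` is tight; and if `F` is irreducible and contains
a subcube ending with a star, then `G` is irreducible and contains a subcube ending with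
a star. -/
theorem star_expand {n : ℕ} (F : Finset (Subcube (n + 1)))
    (hF : IsSubcubePartition F) :
    IsSubcubePartition (starExpand F) ∧
    (IsTight F → IsTight (starExpand F)) ∧
    (IsIrreduciblePartition F → (∃ s ∈ F, s (Fin.last n) = none) →
      IsIrreduciblePartition (starExpand F) ∧
        ∃ u ∈ starExpand F, u (Fin.last (n + 2)) = none) := by
  classical
  obtain ⟨hdisjF, hcovF⟩ := hF
  have hFeq : ∀ s ∈ F, ∀ s' ∈ F, ∀ y : Fin (n + 1) → Bool,
      y ∈ Subcube.points s → y ∈ Subcube.points s' → s = s' := by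
    intro s hs s' hs' y hy hy'
    by_contra hne
    exact absurd (hdisjF s hs s' hs' hne) (Set.not_disjoint_iff.2 ⟨y, hy, hy'⟩)
  have key : ∀ v ∈ starExpand F, ∀ w ∈ starExpand F, ∀ x : Fin (n + 3) → Bool,
      x ∈ Subcube.points v → x ∈ Subcube.points w → v = w := by
    intro v hv w hw x hxv hxw
    obtain ⟨s, hsF, hv'⟩ := expand_cases hv
    obtain ⟨s', hs'F, hw'⟩ := expand_cases hw
    rcases hv' with ⟨hsl, rfl⟩ | ⟨b, hsl, rfl | rfl⟩ <;>
      rcases hw' with ⟨hsl', rfl⟩ | ⟨b', hsl', rfl | rfl⟩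
    · rw [hFeq s hsF s' hs'F (mid x) (mem_cA_iff.1 hxv) (mem_cA_iff.1 hxw)]
    · obtain rfl := hFeq s hsF s' hs'F (mid x) (mem_cA_iff.1 hxv) ((mem_cB_iff.1 hxw).2)
      rw [hsl] at hsl'; simp at hsl'
    · obtain rfl := hFeq s hsF s' hs'F _
        ((update_mem_iff hsl).2 (mem_cA_iff.1 hxv)) (((mem_cC_iff hsl').1 hxw).2)
      rw [hsl] at hsl'; simp at hsl'
    · obtain rfl := hFeq s hsF s' hs'F (mid x) ((mem_cB_iff.1 hxv).2) (mem_cA_iff.1 hxw)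
      rw [hsl] at hsl'; simp at hsl'
    · rw [hFeq s hsF s' hs'F (mid x) ((mem_cB_iff.1 hxv).2) ((mem_cB_iff.1 hxw).2)]
    · have h0 := (mem_cB_iff.1 hxv).1
      have h0' := ((mem_cC_iff hsl').1 hxw).1
      rw [h0] at h0'; simp at h0'
    · obtain rfl := hFeq s hsF s' hs'F _
        (((mem_cC_iff hsl).1 hxv).2) ((update_mem_iff hsl').2 (mem_cA_iff.1 hxw))
      rw [hsl] at hsl'; simp at hsl'
    · have h0 := ((mem_cC_iff hsl).1 hxv).1
      have h0' := (mem_cB_iff.1 hxw).1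
      rw [h0] at h0'; simp at h0'
    · obtain rfl := hFeq s hsF s' hs'F _
        (((mem_cC_iff hsl).1 hxv).2) (((mem_cC_iff hsl').1 hxw).2)
      have hb : b = b' := by have := hsl.symm.trans hsl'; injection this
      rw [hb]
  refine ⟨⟨?_, ?_⟩, ?_, ?_⟩
  · -- pairwise disjoint
    intro v hv w hw hne
    rw [Set.disjoint_left]
    intro x hxv hxw
    exact hne (key v hv w hw x hxv hxw)
  · -- covering
    rw [Set.eq_univ_iff_forall]
    intro x
    simp only [Set.mem_iUnion, exists_prop]
    by_cases h0 : x 0 = true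
    · have hzU : Function.update (mid x) (Fin.last n) (x (Fin.last (n + 2))) ∈
          ⋃ s ∈ F, Subcube.points s := by rw [hcovF]; trivial
      simp only [Set.mem_iUnion, exists_prop] at hzU
      obtain ⟨s, hsF, hzs⟩ := hzU
      cases hsl : s (Fin.last n) with
      | none =>
        exact ⟨cA s, mem_starExpand.2 ⟨s, hsF, by
            rw [seo_none hsl]; exact Finset.mem_singleton_self _⟩,
          mem_cA_iff.2 ((update_mem_iff hsl).1 hzs)⟩
      | some b =>
        exact ⟨cC s b, mem_starExpand.2 ⟨s, hsF, by
            rw [seo_some hsl]; exact Finset.mem_insert.2 (Or.inr (Finset.mem_singleton_self _))⟩,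
          (mem_cC_iff hsl).2 ⟨h0, hzs⟩⟩
    · have h0' : x 0 = false := by simpa using h0
      have hzU : mid x ∈ ⋃ s ∈ F, Subcube.points s := by rw [hcovF]; trivial
      simp only [Set.mem_iUnion, exists_prop] at hzU
      obtain ⟨s, hsF, hzs⟩ := hzU
      cases hsl : s (Fin.last n) with
      | none =>
        exact ⟨cA s, mem_starExpand.2 ⟨s, hsF, by
            rw [seo_none hsl]; exact Finset.mem_singleton_self _⟩, mem_cA_iff.2 hzs⟩
      | some b =>
        exact ⟨cB s, mem_starExpand.2 ⟨s, hsF, by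
            rw [seo_some hsl]; exact Finset.mem_insert_self _ _⟩,
          mem_cB_iff.2 ⟨h0', hzs⟩⟩
  · -- tightness
    intro ht i
    induction i using Fin.cases with
    | zero =>
      obtain ⟨s, hsF, hs⟩ := ht (Fin.last n)
      obtain ⟨b, hb⟩ := Option.ne_none_iff_exists'.1 hs
      refine ⟨cB s, mem_starExpand.2 ⟨s, hsF, by
          rw [seo_some hb]; exact Finset.mem_insert_self _ _⟩, ?_⟩
      rw [cB, cs_zero]; simp
    | succ j =>
      induction j using Fin.lastCases with
      | last =>
        obtain ⟨s, hsF, hs⟩ := ht (Fin.last n)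
        obtain ⟨b, hb⟩ := Option.ne_none_iff_exists'.1 hs
        refine ⟨cC s b, mem_starExpand.2 ⟨s, hsF, by
            rw [seo_some hb]; exact Finset.mem_insert.2 (Or.inr (Finset.mem_singleton_self _))⟩, ?_⟩
        rw [Fin.succ_last, cC, cs_last]; simp
      | cast k =>
        obtain ⟨s, hsF, hs⟩ := ht k
        cases hsl : s (Fin.last n) with
        | none =>
          refine ⟨cA s, mem_starExpand.2 ⟨s, hsF, by
              rw [seo_none hsl]; exact Finset.mem_singleton_self _⟩, ?_⟩
          rw [cA, cs_mid]; exact hs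
        | some b =>
          refine ⟨cB s, mem_starExpand.2 ⟨s, hsF, by
              rw [seo_some hsl]; exact Finset.mem_insert_self _ _⟩, ?_⟩
          rw [cB, cs_mid]; exact hs
  · -- irreducibility
    intro hirr hstar
    obtain ⟨s₀, hs₀F, hs₀⟩ := hstar
    refine ⟨?_, cA s₀, mem_starExpand.2 ⟨s₀, hs₀F, by
        rw [seo_none hs₀]; exact Finset.mem_singleton_self _⟩, by rw [cA, cs_last]⟩
    rintro ⟨G', hsub, h1, h2, u, hu⟩
    have hcube_sub : ∀ v ∈ G', Subcube.points v ⊆ Subcube.points u := by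
      intro v hv x hx
      rw [← hu]
      simp only [Set.mem_iUnion, exists_prop]
      exact ⟨v, hv, hx⟩
    have husub : Subcube.points u ⊆ ⋃ v ∈ G', Subcube.points v := le_of_eq hu.symm
    have hnone_lift : ∀ v ∈ G', ∀ i, v i = none → u i = none := by
      intro v hv i hvi
      obtain ⟨x, hx⟩ := points_nonempty v
      refine none_of_two (hcube_sub v hv hx)
        (hcube_sub v hv (flip_mem hx hvi (!(x i)))) (i := i) ?_
      rw [Function.update_self]
      exact (Bool.not_ne_self (x i)).symm
    have hdec : ∀ v ∈ G', ∃ s ∈ F, (s (Fin.last n) = none ∧ v = cA s) ∨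
        ∃ b, s (Fin.last n) = some b ∧ (v = cB s ∨ v = cC s b) :=
      fun v hv => expand_cases (hsub hv)
    obtain ⟨v₁, hv₁, v₂, hv₂, hv12⟩ := Finset.one_lt_card.1 h1
    cases hu0 : u 0 with
    | some a =>
      cases a with
      | false =>
        -- every cube of G' has the form cB s
        have hall : ∀ v ∈ G', ∃ s, s ∈ F ∧ ∃ b, s (Fin.last n) = some b ∧ v = cB s := by
          intro v hv
          obtain ⟨s, hsF, hc⟩ := hdec v hv
          rcases hc with ⟨hsl, rfl⟩ | ⟨b, hsl, rfl | rfl⟩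
          · exfalso
            obtain ⟨y, hy⟩ := points_nonempty s
            have hx : (Fin.cons true (Fin.snoc y false) : Fin (n + 3) → Bool) ∈
                (cA s).points := mem_cA_iff.2 (by rw [mid_cs]; exact hy)
            have := mem_points.1 (hcube_sub _ hv hx) 0 false hu0
            rw [cs_zero] at this; simp at this
          · exact ⟨s, hsF, b, hsl, rfl⟩
          · exfalso
            obtain ⟨x, hx⟩ := points_nonempty (cC s b)
            have hx0 := ((mem_cC_iff hsl).1 hx).1
            have := mem_points.1 (hcube_sub _ hv hx) 0 false hu0
            rw [hx0] at this; simp at this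
        obtain ⟨s₁, hs₁F, b₁, hb₁, hv₁e⟩ := hall v₁ hv₁
        obtain ⟨s₂, hs₂F, b₂, hb₂, hv₂e⟩ := hall v₂ hv₂
        subst hv₁e; subst hv₂e
        have hs₁₂ : s₁ ≠ s₂ := fun h => hv12 (by rw [h])
        have hulast : u (Fin.last (n + 2)) = none :=
          hnone_lift _ hv₁ _ (by rw [cB, cs_last])
        have hmm : ∀ z : Fin (n + 1) → Bool, z ∈ Subcube.points (mid u) ↔
            ∃ s, (s ∈ F ∧ ∃ b, s (Fin.last n) = some b ∧ cB s ∈ G') ∧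
              z ∈ Subcube.points s := by
          intro z
          constructor
          · intro hz
            have hxu : (Fin.cons false (Fin.snoc z false) : Fin (n + 3) → Bool) ∈
                Subcube.points u := by
              rw [mem_points_decomp]
              refine ⟨fun b hb => by
                  rw [hu0] at hb; rw [cs_zero]; exact (Option.some.inj hb),
                by rw [mid_cs]; exact hz,
                fun b hb => by rw [hulast] at hb; simp at hb⟩
            have := husub hxu
            simp only [Set.mem_iUnion, exists_prop] at this
            obtain ⟨v, hvG, hxv⟩ := this
            obtain ⟨s, hsF, b, hsl, rfl⟩ := hall v hvG
            refine ⟨s, ⟨hsF, b, hsl, hvG⟩, ?_⟩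
            have := (mem_cB_iff.1 hxv).2
            rwa [mid_cs] at this
          · rintro ⟨s, ⟨hsF, b, hsl, hG⟩, hzs⟩
            have hx : (Fin.cons false (Fin.snoc z false) : Fin (n + 3) → Bool) ∈
                (cB s).points := mem_cB_iff.2 ⟨cs_zero _ _ _, by rw [mid_cs]; exact hzs⟩
            have hxu := hcube_sub _ hG hx
            rw [mem_points_decomp] at hxu
            have := hxu.2.1
            rwa [mid_cs] at this
        refine hirr ⟨F.filter (fun s => ∃ b, s (Fin.last n) = some b ∧ cB s ∈ G'),
          Finset.filter_subset _ _, ?_, ?_, mid u, ?_⟩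
        · refine Finset.one_lt_card.2 ⟨s₁, ?_, s₂, ?_, hs₁₂⟩ <;> rw [Finset.mem_filter]
          · exact ⟨hs₁F, b₁, hb₁, hv₁⟩
          · exact ⟨hs₂F, b₂, hb₂, hv₂⟩
        · apply Finset.card_lt_card
          rw [Finset.ssubset_def]
          refine ⟨Finset.filter_subset _ _, fun hsub' => ?_⟩
          have := hsub' hs₀F
          rw [Finset.mem_filter] at this
          obtain ⟨-, b, hb, -⟩ := this
          rw [hs₀] at hb; simp at hb
        · ext z
          simp only [Set.mem_iUnion, exists_prop, Finset.mem_filter]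
          exact (hmm z).symm
      | true =>
        have hall : ∀ v ∈ G', ∃ s, s ∈ F ∧ ∃ b, s (Fin.last n) = some b ∧ v = cC s b := by
          intro v hv
          obtain ⟨s, hsF, hc⟩ := hdec v hv
          rcases hc with ⟨hsl, rfl⟩ | ⟨b, hsl, rfl | rfl⟩
          · exfalso
            obtain ⟨y, hy⟩ := points_nonempty s
            have hx : (Fin.cons false (Fin.snoc y false) : Fin (n + 3) → Bool) ∈
                (cA s).points := mem_cA_iff.2 (by rw [mid_cs]; exact hy)
            have := mem_points.1 (hcube_sub _ hv hx) 0 true hu0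
            rw [cs_zero] at this; simp at this
          · exfalso
            obtain ⟨x, hx⟩ := points_nonempty (cB s)
            have hx0 := (mem_cB_iff.1 hx).1
            have := mem_points.1 (hcube_sub _ hv hx) 0 true hu0
            rw [hx0] at this; simp at this
          · exact ⟨s, hsF, b, hsl, rfl⟩
        obtain ⟨s₁, hs₁F, b₁, hb₁, hv₁e⟩ := hall v₁ hv₁
        obtain ⟨s₂, hs₂F, b₂, hb₂, hv₂e⟩ := hall v₂ hv₂
        subst hv₁e; subst hv₂e
        have hs₁₂ : s₁ ≠ s₂ := by
          rintro rfl
          have hb : b₁ = b₂ := by have := hb₁.symm.trans hb₂; injection this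
          exact hv12 (by rw [hb])
        have hmidlast : u (Fin.succ (Fin.castSucc (Fin.last n))) = none := by
          apply hnone_lift _ hv₁
          rw [cC, cs_mid]
          exact Function.update_self _ _ _
        have hmlast : mid u (Fin.last n) = none := hmidlast
        have hmm : ∀ z : Fin (n + 1) → Bool,
            z ∈ Subcube.points (Function.update (mid u) (Fin.last n) (u (Fin.last (n + 2)))) ↔
            ∃ s, (s ∈ F ∧ ∃ b, s (Fin.last n) = some b ∧ cC s b ∈ G') ∧
              z ∈ Subcube.points s := by
          intro z
          have hxu : (Fin.cons true (Fin.snoc z (z (Fin.last n))) : Fin (n + 3) → Bool) ∈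
              Subcube.points u ↔
              z ∈ Subcube.points (Function.update (mid u) (Fin.last n)
                (u (Fin.last (n + 2)))) := by
            rw [mem_points_decomp]
            constructor
            · rintro ⟨-, hm', hl'⟩ j b hj
              rcases eq_or_ne j (Fin.last n) with rfl | hne
              · rw [Function.update_self] at hj
                have := hl' b hj
                rwa [cs_last] at this
              · rw [Function.update_of_ne hne] at hj
                have := hm' j b hj
                rwa [mid_cs] at this
            · intro hz
              refine ⟨fun b hb => by
                  rw [hu0] at hb; rw [cs_zero]; exact (Option.some.inj hb),
                ?_, fun b hb => ?_⟩
              · rw [mid_cs]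
                intro j b hj
                rcases eq_or_ne j (Fin.last n) with rfl | hne
                · rw [hmlast] at hj; simp at hj
                · exact hz j b (by rw [Function.update_of_ne hne]; exact hj)
              · rw [cs_last]
                exact hz (Fin.last n) b (by rw [Function.update_self]; exact hb)
          constructor
          · intro hz
            have := husub (hxu.2 hz)
            simp only [Set.mem_iUnion, exists_prop] at this
            obtain ⟨v, hvG, hxv⟩ := this
            obtain ⟨s, hsF, b, hsl, rfl⟩ := hall v hvG
            refine ⟨s, ⟨hsF, b, hsl, hvG⟩, ?_⟩
            have h2' := ((mem_cC_iff hsl).1 hxv).2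
            rwa [mid_cs, cs_last, Function.update_eq_self] at h2'
          · rintro ⟨s, ⟨hsF, b, hsl, hG⟩, hzs⟩
            have hx : (Fin.cons true (Fin.snoc z (z (Fin.last n))) : Fin (n + 3) → Bool) ∈
                (cC s b).points := by
              rw [mem_cC_iff hsl]
              exact ⟨cs_zero _ _ _, by
                rw [mid_cs, cs_last, Function.update_eq_self]; exact hzs⟩
            exact hxu.1 (hcube_sub _ hG hx)
        refine hirr ⟨F.filter (fun s => ∃ b, s (Fin.last n) = some b ∧ cC s b ∈ G'),
          Finset.filter_subset _ _, ?_, ?_,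
          Function.update (mid u) (Fin.last n) (u (Fin.last (n + 2))), ?_⟩
        · refine Finset.one_lt_card.2 ⟨s₁, ?_, s₂, ?_, hs₁₂⟩ <;> rw [Finset.mem_filter]
          · exact ⟨hs₁F, b₁, hb₁, hv₁⟩
          · exact ⟨hs₂F, b₂, hb₂, hv₂⟩
        · apply Finset.card_lt_card
          rw [Finset.ssubset_def]
          refine ⟨Finset.filter_subset _ _, fun hsub' => ?_⟩
          have := hsub' hs₀F
          rw [Finset.mem_filter] at this
          obtain ⟨-, b, hb, -⟩ := this
          rw [hs₀] at hb; simp at hb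
        · ext z
          simp only [Set.mem_iUnion, exists_prop, Finset.mem_filter]
          exact (hmm z).symm
    | none =>
      obtain ⟨x₀, hx₀⟩ := points_nonempty u
      have hABex : ∃ s ∈ F, (s (Fin.last n) = none ∧ cA s ∈ G') ∨
          (∃ b, s (Fin.last n) = some b ∧ cB s ∈ G') := by
        have hxf : Function.update x₀ 0 false ∈ Subcube.points u := flip_mem hx₀ hu0 false
        have := husub hxf
        simp only [Set.mem_iUnion, exists_prop] at this
        obtain ⟨v, hvG, hxv⟩ := this
        obtain ⟨s, hsF, hc⟩ := hdec v hvG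
        rcases hc with ⟨hsl, rfl⟩ | ⟨b, hsl, rfl | rfl⟩
        · exact ⟨s, hsF, Or.inl ⟨hsl, hvG⟩⟩
        · exact ⟨s, hsF, Or.inr ⟨b, hsl, hvG⟩⟩
        · exfalso
          have h0 := ((mem_cC_iff hsl).1 hxv).1
          rw [Function.update_self] at h0
          simp at h0
      have hulast : u (Fin.last (n + 2)) = none := by
        obtain ⟨s, hsF, hc⟩ := hABex
        rcases hc with ⟨hsl, hG⟩ | ⟨b, hsl, hG⟩
        · exact hnone_lift _ hG _ (by rw [cA, cs_last])
        · exact hnone_lift _ hG _ (by rw [cB, cs_last])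
      have humem : ∀ x : Fin (n + 3) → Bool,
          x ∈ Subcube.points u ↔ mid x ∈ Subcube.points (mid u) := by
        intro x
        rw [mem_points_decomp]
        constructor
        · rintro ⟨-, h, -⟩; exact h
        · intro h
          exact ⟨fun b hb => by rw [hu0] at hb; simp at hb, h,
            fun b hb => by rw [hulast] at hb; simp at hb⟩
      have hU1 : ∀ z : Fin (n + 1) → Bool, z ∈ Subcube.points (mid u) ↔
          ∃ s, (s ∈ F ∧ ((s (Fin.last n) = none ∧ cA s ∈ G') ∨
            (∃ b, s (Fin.last n) = some b ∧ cB s ∈ G'))) ∧ z ∈ Subcube.points s := by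
        intro z
        constructor
        · intro hz
          have hxu : (Fin.cons false (Fin.snoc z false) : Fin (n + 3) → Bool) ∈
              Subcube.points u := (humem _).2 (by rw [mid_cs]; exact hz)
          have := husub hxu
          simp only [Set.mem_iUnion, exists_prop] at this
          obtain ⟨v, hvG, hxv⟩ := this
          obtain ⟨s, hsF, hc⟩ := hdec v hvG
          rcases hc with ⟨hsl, rfl⟩ | ⟨b, hsl, rfl | rfl⟩
          · refine ⟨s, ⟨hsF, Or.inl ⟨hsl, hvG⟩⟩, ?_⟩
            have := mem_cA_iff.1 hxv; rwa [mid_cs] at this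
          · refine ⟨s, ⟨hsF, Or.inr ⟨b, hsl, hvG⟩⟩, ?_⟩
            have := (mem_cB_iff.1 hxv).2; rwa [mid_cs] at this
          · exfalso
            have h0 := ((mem_cC_iff hsl).1 hxv).1
            rw [cs_zero] at h0; simp at h0
        · rintro ⟨s, ⟨hsF, hc⟩, hzs⟩
          rcases hc with ⟨hsl, hG⟩ | ⟨b, hsl, hG⟩
          · have hx : (Fin.cons false (Fin.snoc z false) : Fin (n + 3) → Bool) ∈
                (cA s).points := mem_cA_iff.2 (by rw [mid_cs]; exact hzs)
            have := (humem _).1 (hcube_sub _ hG hx); rwa [mid_cs] at this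
          · have hx : (Fin.cons false (Fin.snoc z false) : Fin (n + 3) → Bool) ∈
                (cB s).points := mem_cB_iff.2 ⟨cs_zero _ _ _, by rw [mid_cs]; exact hzs⟩
            have := (humem _).1 (hcube_sub _ hG hx); rwa [mid_cs] at this
      have hU2 : ∀ z : Fin (n + 1) → Bool, z ∈ Subcube.points (mid u) ↔
          ∃ s, (s ∈ F ∧ ((s (Fin.last n) = none ∧ cA s ∈ G') ∨
            (∃ b, s (Fin.last n) = some b ∧ cC s b ∈ G'))) ∧ z ∈ Subcube.points s := by
        intro z
        constructor
        · intro hz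
          have hxu : (Fin.cons true (Fin.snoc z (z (Fin.last n))) : Fin (n + 3) → Bool) ∈
              Subcube.points u := (humem _).2 (by rw [mid_cs]; exact hz)
          have := husub hxu
          simp only [Set.mem_iUnion, exists_prop] at this
          obtain ⟨v, hvG, hxv⟩ := this
          obtain ⟨s, hsF, hc⟩ := hdec v hvG
          rcases hc with ⟨hsl, rfl⟩ | ⟨b, hsl, rfl | rfl⟩
          · refine ⟨s, ⟨hsF, Or.inl ⟨hsl, hvG⟩⟩, ?_⟩
            have := mem_cA_iff.1 hxv; rwa [mid_cs] at this
          · exfalso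
            have h0 := (mem_cB_iff.1 hxv).1
            rw [cs_zero] at h0; simp at h0
          · refine ⟨s, ⟨hsF, Or.inr ⟨b, hsl, hvG⟩⟩, ?_⟩
            have := ((mem_cC_iff hsl).1 hxv).2
            rwa [mid_cs, cs_last, Function.update_eq_self] at this
        · rintro ⟨s, ⟨hsF, hc⟩, hzs⟩
          rcases hc with ⟨hsl, hG⟩ | ⟨b, hsl, hG⟩
          · have hx : (Fin.cons true (Fin.snoc z (z (Fin.last n))) : Fin (n + 3) → Bool) ∈
                (cA s).points := mem_cA_iff.2 (by rw [mid_cs]; exact hzs)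
            have := (humem _).1 (hcube_sub _ hG hx); rwa [mid_cs] at this
          · have hx : (Fin.cons true (Fin.snoc z (z (Fin.last n))) : Fin (n + 3) → Bool) ∈
                (cC s b).points := by
              rw [mem_cC_iff hsl]
              exact ⟨cs_zero _ _ _, by
                rw [mid_cs, cs_last, Function.update_eq_self]; exact hzs⟩
            have := (humem _).1 (hcube_sub _ hG hx); rwa [mid_cs] at this
      have hBC : ∀ s, (s ∈ F ∧ ∃ b, s (Fin.last n) = some b ∧ cB s ∈ G') →
          ∃ b, s (Fin.last n) = some b ∧ cC s b ∈ G' := by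
        rintro s ⟨hsF, b, hsl, hG⟩
        obtain ⟨y, hy⟩ := points_nonempty s
        have hym : y ∈ Subcube.points (mid u) :=
          (hU1 y).2 ⟨s, ⟨hsF, Or.inr ⟨b, hsl, hG⟩⟩, hy⟩
        obtain ⟨t, ⟨htF, hct⟩, hyt⟩ := (hU2 y).1 hym
        obtain rfl := hFeq s hsF t htF y hy hyt
        rcases hct with ⟨hsl', -⟩ | ⟨b', hsl', hG'⟩
        · rw [hsl] at hsl'; simp at hsl'
        · exact ⟨b', hsl', hG'⟩
      have hCB : ∀ s, (s ∈ F ∧ ∃ b, s (Fin.last n) = some b ∧ cC s b ∈ G') →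
          ∃ b, s (Fin.last n) = some b ∧ cB s ∈ G' := by
        rintro s ⟨hsF, b, hsl, hG⟩
        obtain ⟨y, hy⟩ := points_nonempty s
        have hym : y ∈ Subcube.points (mid u) :=
          (hU2 y).2 ⟨s, ⟨hsF, Or.inr ⟨b, hsl, hG⟩⟩, hy⟩
        obtain ⟨t, ⟨htF, hct⟩, hyt⟩ := (hU1 y).1 hym
        obtain rfl := hFeq s hsF t htF y hy hyt
        rcases hct with ⟨hsl', -⟩ | ⟨b', hsl', hG'⟩
        · rw [hsl] at hsl'; simp at hsl'
        · exact ⟨b', hsl', hG'⟩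
      set FAB := F.filter (fun s => (s (Fin.last n) = none ∧ cA s ∈ G') ∨
        (∃ b, s (Fin.last n) = some b ∧ cB s ∈ G')) with hFAB
      have hne : FAB.Nonempty := by
        obtain ⟨s, hsF, hc⟩ := hABex
        exact ⟨s, Finset.mem_filter.2 ⟨hsF, hc⟩⟩
      have hcard1 : FAB.card ≠ 1 := by
        intro hc1
        obtain ⟨s, hsing⟩ := Finset.card_eq_one.1 hc1
        have hsmem : s ∈ FAB := by rw [hsing]; exact Finset.mem_singleton_self s
        rw [hFAB, Finset.mem_filter] at hsmem
        obtain ⟨hsF, hcs⟩ := hsmem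
        rcases hcs with ⟨hsl, hGA⟩ | ⟨b, hsl, hGB⟩
        · have hAll : ∀ v ∈ G', v = cA s := by
            intro v hv
            obtain ⟨t, htF, hct⟩ := hdec v hv
            rcases hct with ⟨htl, rfl⟩ | ⟨b, htl, rfl | rfl⟩
            · have ht : t ∈ FAB := Finset.mem_filter.2 ⟨htF, Or.inl ⟨htl, hv⟩⟩
              rw [hsing, Finset.mem_singleton] at ht
              rw [ht]
            · have ht : t ∈ FAB := Finset.mem_filter.2 ⟨htF, Or.inr ⟨b, htl, hv⟩⟩
              rw [hsing, Finset.mem_singleton] at ht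
              subst ht
              rw [hsl] at htl; simp at htl
            · obtain ⟨b', hb', hGB'⟩ := hCB t ⟨htF, b, htl, hv⟩
              have ht : t ∈ FAB := Finset.mem_filter.2 ⟨htF, Or.inr ⟨b', hb', hGB'⟩⟩
              rw [hsing, Finset.mem_singleton] at ht
              subst ht
              rw [hsl] at hb'; simp at hb'
          exact hv12 ((hAll v₁ hv₁).trans (hAll v₂ hv₂).symm)
        · obtain ⟨y, hy⟩ := points_nonempty s
          have hym : y ∈ Subcube.points (mid u) :=
            (hU1 y).2 ⟨s, ⟨hsF, Or.inr ⟨b, hsl, hGB⟩⟩, hy⟩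
          have hxu : (Fin.cons true (Fin.snoc y (!b)) : Fin (n + 3) → Bool) ∈
              Subcube.points u := (humem _).2 (by rw [mid_cs]; exact hym)
          have := husub hxu
          simp only [Set.mem_iUnion, exists_prop] at this
          obtain ⟨v, hvG, hxv⟩ := this
          obtain ⟨t, htF, hct⟩ := hdec v hvG
          rcases hct with ⟨htl, rfl⟩ | ⟨b', htl, rfl | rfl⟩
          · have ht : t ∈ FAB := Finset.mem_filter.2 ⟨htF, Or.inl ⟨htl, hvG⟩⟩
            rw [hsing, Finset.mem_singleton] at ht
            subst ht
            rw [hsl] at htl; simp at htl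
          · have h0 := (mem_cB_iff.1 hxv).1
            rw [cs_zero] at h0; simp at h0
          · obtain ⟨b'', hb'', hGB''⟩ := hCB t ⟨htF, b', htl, hvG⟩
            have ht : t ∈ FAB := Finset.mem_filter.2 ⟨htF, Or.inr ⟨b'', hb'', hGB''⟩⟩
            rw [hsing, Finset.mem_singleton] at ht
            subst ht
            have hbb : b' = b := by have := htl.symm.trans hsl; injection this
            subst hbb
            have hupd := ((mem_cC_iff htl).1 hxv).2
            rw [mid_cs, cs_last] at hupd
            have := hupd (Fin.last n) b' hsl
            rw [Function.update_self] at this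
            simp at this
      have h1' : 1 < FAB.card := by
        have hp := Finset.card_pos.2 hne
        omega
      have h2' : FAB.card < F.card := by
        apply Finset.card_lt_card
        rw [Finset.ssubset_def]
        refine ⟨Finset.filter_subset _ _, fun hsub' => ?_⟩
        have hGsub : starExpand F ⊆ G' := by
          intro v hv
          obtain ⟨s, hsF, hc⟩ := expand_cases hv
          have hsFAB := hsub' hsF
          rw [hFAB, Finset.mem_filter] at hsFAB
          rcases hc with ⟨hsl, rfl⟩ | ⟨b, hsl, rfl | rfl⟩
          · rcases hsFAB.2 with ⟨-, hG⟩ | ⟨b, hb, -⟩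
            · exact hG
            · rw [hsl] at hb; simp at hb
          · rcases hsFAB.2 with ⟨hb, -⟩ | ⟨b', hb', hG⟩
            · rw [hsl] at hb; simp at hb
            · exact hG
          · rcases hsFAB.2 with ⟨hb, -⟩ | ⟨b', hb', hGB⟩
            · rw [hsl] at hb; simp at hb
            · obtain ⟨b'', hb'', hGC⟩ := hBC s ⟨hsF, b', hb', hGB⟩
              have hbb : b'' = b := by have := hb''.symm.trans hsl; injection this
              rw [← hbb]
              exact hGC
        exact absurd (Finset.card_le_card hGsub) (not_le.2 h2)
      refine hirr ⟨FAB, by rw [hFAB]; exact Finset.filter_subset _ _, h1', h2', mid u, ?_⟩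
      ext z
      simp only [Set.mem_iUnion, exists_prop, hFAB, Finset.mem_filter]
      exact (hU1 z).symm
end
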